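/- arXiv:1901.08364 — 6 statements merged into one kernel-verified Lean document; each statement's English description precedes it below -/
import Mathlib

section
/- Let f = a₀ + a₁X + ⋯ + aₙXⁿ ∈ ℝ[X] with aₙ ≠ 0. Let V₊ be the number of sign changes in a₀, a₁, …, aₙ and V₋ the number of sign changes in a₀, −a₁, …, (−1)ⁿ aₙ. Let N₊ (resp. N₋) be the number of positive (resp. negative) real roots of f counted with multiplicity. Then V₊ − N₊ and V₋ − N₋ are non-negative even integers. Moreover, if all complex roots of f are real, then N₊ = V₊ and N₋ = V₋. -/
open Polynomial

/-- The number of sign changes in a list of real numbers, counted after deleting zeros. -/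
noncomputable def signChanges (l : List ℝ) : ℕ :=
  let l' := l.filter (fun a => decide (a ≠ 0))
  (l'.zip l'.tail).countP (fun p => decide (p.1 * p.2 < 0))

/-! Multiplying by `X - η` with `η > 0` adds at least one sign change, so `V₊ ≥ N₊`; this is
`Polynomial.roots_countP_pos_le_signVariations`. Both `V₊` and `N₊` are even exactly when the
lowest and the highest nonzero coefficients have the same sign: for `V₊` by stripping the leading
term one at a time, for `N₊` by splitting off the positive roots and applying the intermediate
value theorem to the remaining factor on `[0, ∞)`. The negative roots are the positive roots of
`f(-X)`. Finally, two consecutive nonzero coefficients `aᵢ, aⱼ` (`i < j`) contribute at most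
`j - i` sign changes to `V₊ + V₋`, and exactly one when `j = i + 1`, so `V₊ + V₋ ≤ n - k` where
`Xᵏ` is the largest power of `X` dividing `f`; if `f` splits, `N₊ + N₋ + k = n` forces equality. -/

section SignRules
variable {R : Type*} [Ring R] [LinearOrder R] [IsStrictOrderedRing R] {a b t : R}

theorem sign_ne_sign_iff_mul_neg (ha : a ≠ 0) (hb : b ≠ 0) :
    SignType.sign a ≠ SignType.sign b ↔ a * b < 0 := by
  rcases ha.lt_or_gt with ha | ha <;> rcases hb.lt_or_gt with hb | hb <;>
    simp [sign_neg, sign_pos, ha, hb, mul_pos_of_neg_of_neg, mul_neg_of_neg_of_pos,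
      mul_neg_of_pos_of_neg, le_of_lt]

theorem mul_pos_iff_not_mul_pos_of_mul_neg (hab : a * b < 0) (ht : t ≠ 0) :
    0 < a * t ↔ ¬0 < b * t := by
  rcases ht.lt_or_gt with ht | ht <;> rcases mul_neg_iff.1 hab with ⟨ha, hb⟩ | ⟨ha, hb⟩ <;>
    simp [mul_pos_iff, ha, hb, ht, ha.le, hb.le, ht.le, not_lt.2]

theorem mul_pos_iff_mul_pos_of_mul_pos (hab : 0 < a * b) : 0 < a * t ↔ 0 < b * t := by
  rcases mul_pos_iff.1 hab with ⟨ha, hb⟩ | ⟨ha, hb⟩ <;>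
    simp [mul_pos_iff, ha, hb, ha.le, hb.le, not_lt.2]

end SignRules

theorem List.zip_dropLast_tail {α : Type*} : ∀ l : List α, l.dropLast.zip l.tail = l.zip l.tail
  | [] | [_] => rfl
  | a :: b :: l => by
    simpa [List.dropLast_cons_cons] using List.zip_dropLast_tail (b :: l)

theorem List.countP_zip_tail_reverse {α : Type*} (p : α × α → Bool)
    (hp : ∀ x y, p (x, y) = p (y, x)) (l : List α) :
    (l.reverse.zip l.reverse.tail).countP p = (l.zip l.tail).countP p := by
  have hlen : l.dropLast.length = l.tail.length := by simp
  rw [← List.zip_dropLast_tail l.reverse, List.dropLast_reverse, List.tail_reverse, List.zip,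
    ← List.reverse_zipWith hlen.symm, List.countP_reverse, ← List.zip, ← List.zip_swap,
    List.countP_map, ← List.zip_dropLast_tail]
  congr 1
  funext x
  exact (hp x.1 x.2).symm

theorem signChanges_reverse (l : List ℝ) : signChanges l.reverse = signChanges l := by
  simp only [signChanges, List.filter_reverse]
  exact List.countP_zip_tail_reverse _ (fun x y => by rw [mul_comm]) _

theorem length_destutter'_sign {a : ℝ} (ha : a ≠ 0) :
    ∀ l : List ℝ, (∀ x ∈ l, x ≠ 0) →
      ((l.map SignType.sign).destutter' (· ≠ ·) (SignType.sign a)).length =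
        ((a :: l).zip l).countP (fun p => decide (p.1 * p.2 < 0)) + 1
  | [], _ => rfl
  | b :: l, hl => by
    have hb : b ≠ 0 := hl b (by simp)
    have ih := length_destutter'_sign hb l (fun x hx => hl x (by simp [hx]))
    rw [List.map_cons, List.destutter'_cons, List.zip_cons_cons, List.countP_cons]
    by_cases hab : a * b < 0
    · rw [if_pos ((sign_ne_sign_iff_mul_neg ha hb).2 hab)]
      simp [ih, hab]
    · have hs : SignType.sign a = SignType.sign b :=
        not_not.1 (mt (sign_ne_sign_iff_mul_neg ha hb).1 hab)
      rw [if_neg (not_not.2 hs), hs, ih]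
      simp [hab]

theorem signChanges_eq_length_destutter (l : List ℝ) :
    signChanges l = (((l.map SignType.sign).filter (· ≠ 0)).destutter (· ≠ ·)).length - 1 := by
  have hfilter : (l.map SignType.sign).filter (· ≠ 0) =
      (l.filter (fun a => decide (a ≠ 0))).map SignType.sign := by
    rw [List.filter_map]
    congr 1
    exact List.filter_congr fun x _ => by simp
  rw [hfilter, signChanges]
  generalize hm : l.filter (fun a => decide (a ≠ 0)) = m
  have hm0 : ∀ x ∈ m, x ≠ 0 := by
    intro x hx
    rw [← hm] at hx
    simpa using List.of_mem_filter hx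
  cases m with
  | nil => rfl
  | cons a m =>
    rw [List.map_cons, List.destutter_cons',
      length_destutter'_sign (hm0 a (by simp)) m (fun x hx => hm0 x (by simp [hx]))]
    rfl

theorem Multiset.card_eq_countP_pos_add_countP_neg_add_count_zero {α : Type*} [LinearOrder α]
    [Zero α] (s : Multiset α) :
    Multiset.card s = s.countP (0 < ·) + s.countP (· < 0) + s.count 0 := by
  induction s using Multiset.induction_on with
  | empty => simp
  | cons a s ih =>
    simp only [Multiset.card_cons, Multiset.countP_cons, Multiset.count_cons, ih]
    rcases lt_trichotomy a 0 with h | rfl | h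
    · simp [h, h.not_gt, h.ne']; omega
    · simp; omega
    · simp [h, h.not_gt, h.ne]; omega

namespace Polynomial

theorem signVariations_eq_signChanges (P : ℝ[X]) :
    P.signVariations = signChanges ((List.range (P.natDegree + 1)).map P.coeff) := by
  rcases eq_or_ne P 0 with rfl | hP
  · simp [signChanges]
  rw [← signChanges_reverse, ← List.map_reverse, signChanges_eq_length_destutter,
    signVariations, coeffList, withBotSucc_degree_eq_natDegree_add_one hP]

theorem natDegree_comp_neg_X {R : Type*} [Ring R] (P : R[X]) :
    (P.comp (-X)).natDegree = P.natDegree :=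
  natDegree_eq_natDegree degree_comp_neg_X

theorem coeff_comp_neg_X {R : Type*} [CommRing R] (P : R[X]) (i : ℕ) :
    (P.comp (-X)).coeff i = (-1) ^ i * P.coeff i := by
  simpa [mul_comm] using comp_C_mul_X_coeff (p := P) (r := -1) (n := i)

theorem eraseLead_comp_neg_X {R : Type*} [CommRing R] (P : R[X]) :
    (P.comp (-X)).eraseLead = P.eraseLead.comp (-X) := by
  ext i
  simp only [eraseLead_coeff, coeff_comp_neg_X, natDegree_comp_neg_X]
  split_ifs <;> simp

theorem countP_neg_roots_eq_countP_pos_roots_comp_neg_X {R : Type*} [CommRing R]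
    [LinearOrder R] [IsStrictOrderedRing R] (P : R[X]) :
    P.roots.countP (· < 0) = (P.comp (-X)).roots.countP (0 < ·) := by
  rw [roots_comp_neg_X, Multiset.countP_map, Multiset.countP_eq_card_filter]
  simp

theorem count_zero_roots_eq_natTrailingDegree {R : Type*} [CommRing R] [IsDomain R]
    [DecidableEq R] (P : R[X]) :
    P.roots.count 0 = P.natTrailingDegree := by
  rw [count_roots, rootMultiplicity_eq_natTrailingDegree']

section Semiring
variable {R : Type*} [Semiring R] {P : R[X]}

theorem natTrailingDegree_lt_natDegree_iff_eraseLead_ne_zero :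
    P.natTrailingDegree < P.natDegree ↔ P.eraseLead ≠ 0 := by
  constructor
  · intro hlt h
    have hP : P ≠ 0 := by rintro rfl; simp at hlt
    have := congrArg (coeff · P.natTrailingDegree) h
    simp only [eraseLead_coeff_of_ne _ hlt.ne, coeff_zero] at this
    exact mem_support_iff.1 (natTrailingDegree_mem_support_of_nonzero hP) this
  · intro h
    obtain ⟨i, hi⟩ := Finset.nonempty_of_ne_empty (mt support_eq_empty.1 h)
    exact (natTrailingDegree_le_of_mem_supp i
      (Finset.mem_of_mem_erase (eraseLead_support P ▸ hi))).trans_lt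
      (lt_natDegree_of_mem_eraseLead_support hi)

theorem trailingCoeff_eq_leadingCoeff_of_eraseLead_eq_zero (h : P.eraseLead = 0) :
    P.trailingCoeff = P.leadingCoeff := by
  have : P.natTrailingDegree = P.natDegree :=
    (natTrailingDegree_le_natDegree P).antisymm
      (not_lt.1 (mt natTrailingDegree_lt_natDegree_iff_eraseLead_ne_zero.1 (not_not.2 h)))
  rw [trailingCoeff, leadingCoeff, this]

theorem natTrailingDegree_eraseLead (h : P.eraseLead ≠ 0) :
    P.eraseLead.natTrailingDegree = P.natTrailingDegree := by
  have hlt := natTrailingDegree_lt_natDegree_iff_eraseLead_ne_zero.2 h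
  refine le_antisymm (natTrailingDegree_le_of_ne_zero ?_) (le_natTrailingDegree h fun m hm => ?_)
  · rw [eraseLead_coeff_of_ne _ hlt.ne]
    exact mem_support_iff.1 (natTrailingDegree_mem_support_of_nonzero (by rintro rfl; simp at h))
  · rw [eraseLead_coeff_of_ne _ (hm.trans hlt).ne]
    exact coeff_eq_zero_of_lt_natTrailingDegree hm

theorem trailingCoeff_eraseLead (h : P.eraseLead ≠ 0) :
    P.eraseLead.trailingCoeff = P.trailingCoeff := by
  rw [trailingCoeff, natTrailingDegree_eraseLead h, eraseLead_coeff_of_ne _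
    (natTrailingDegree_lt_natDegree_iff_eraseLead_ne_zero.2 h).ne, trailingCoeff]

theorem signVariations_eq_zero_of_eraseLead_eq_zero [LinearOrder R] (h : P.eraseLead = 0) :
    P.signVariations = 0 := by
  rcases eq_or_ne P 0 with rfl | hP
  · simp
  rw [signVariations_eq_eraseLead_add_ite hP, h]
  simp [hP]

end Semiring

section OrderedRing
variable {R : Type*} [Ring R] [LinearOrder R] [IsStrictOrderedRing R]

theorem signVariations_eq_eraseLead_add_ite_mul_neg {P : R[X]} (h : P.eraseLead ≠ 0) :
    P.signVariations = P.eraseLead.signVariations +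
      if P.leadingCoeff * P.eraseLead.leadingCoeff < 0 then 1 else 0 := by
  have hP : P ≠ 0 := by rintro rfl; simp at h
  have ha : P.leadingCoeff ≠ 0 := leadingCoeff_ne_zero.2 hP
  have hb : P.eraseLead.leadingCoeff ≠ 0 := leadingCoeff_ne_zero.2 h
  rw [signVariations_eq_eraseLead_add_ite hP]
  congr 1
  refine if_congr ?_ rfl rfl
  rcases ha.lt_or_gt with ha | ha <;> rcases hb.lt_or_gt with hb | hb <;>
    simp [sign_neg, sign_pos, ha, hb, mul_pos_of_neg_of_neg, mul_neg_of_neg_of_pos,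
      mul_neg_of_pos_of_neg, le_of_lt]

theorem even_signVariations_iff {P : R[X]} (hP : P ≠ 0) :
    Even P.signVariations ↔ 0 < P.leadingCoeff * P.trailingCoeff := by
  by_cases h : P.eraseLead = 0
  · rw [signVariations_eq_zero_of_eraseLead_eq_zero h,
      trailingCoeff_eq_leadingCoeff_of_eraseLead_eq_zero h]
    simpa using mul_self_pos.2 (leadingCoeff_ne_zero.2 hP)
  have ih := even_signVariations_iff (P := P.eraseLead) h
  have ha : P.leadingCoeff ≠ 0 := leadingCoeff_ne_zero.2 hP
  have hb : P.eraseLead.leadingCoeff ≠ 0 := leadingCoeff_ne_zero.2 h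
  rw [signVariations_eq_eraseLead_add_ite_mul_neg h, ← trailingCoeff_eraseLead h]
  split_ifs with hab
  · rw [Nat.even_add_one, ih, mul_pos_iff_not_mul_pos_of_mul_neg hab
      (trailingCoeff_nonzero_iff_nonzero.2 h)]
  · rw [add_zero, ih, mul_pos_iff_mul_pos_of_mul_pos
      (lt_of_le_of_ne (not_lt.1 hab) (mul_ne_zero ha hb).symm)]
termination_by P.support.card
decreasing_by exact eraseLead_support_card_lt hP

end OrderedRing

theorem signVariations_add_signVariations_comp_neg_X_add_natTrailingDegree_le {R : Type*}
    [CommRing R] [LinearOrder R] [IsStrictOrderedRing R] (P : R[X]) :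
    P.signVariations + (P.comp (-X)).signVariations + P.natTrailingDegree ≤ P.natDegree := by
  by_cases h : P.eraseLead = 0
  · have hc : (P.comp (-X)).eraseLead = 0 := by rw [eraseLead_comp_neg_X, h, zero_comp]
    rw [signVariations_eq_zero_of_eraseLead_eq_zero h,
      signVariations_eq_zero_of_eraseLead_eq_zero hc]
    simpa using natTrailingDegree_le_natDegree P
  have ih := signVariations_add_signVariations_comp_neg_X_add_natTrailingDegree_le P.eraseLead
  have hc : (P.comp (-X)).eraseLead ≠ 0 := by
    rwa [eraseLead_comp_neg_X, Ne, comp_neg_X_eq_zero_iff]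
  have hd : P.eraseLead.natDegree < P.natDegree :=
    (eraseLead_natDegree_lt_or_eraseLead_eq_zero P).resolve_right h
  rw [signVariations_eq_eraseLead_add_ite_mul_neg h,
    signVariations_eq_eraseLead_add_ite_mul_neg hc, eraseLead_comp_neg_X,
    comp_neg_X_leadingCoeff_eq, comp_neg_X_leadingCoeff_eq, ← natTrailingDegree_eraseLead h]
  set a := P.leadingCoeff
  set b := P.eraseLead.leadingCoeff
  set d := P.eraseLead.natDegree
  rcases Nat.lt_or_ge (d + 1) P.natDegree with hgap | hgap
  · split_ifs <;> omega
  -- adjacent exponents: the substitution `X ↦ -X` flips the sign of `a * b`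
  obtain hn : P.natDegree = d + 1 := by omega
  have hflip : (-1) ^ P.natDegree * a * ((-1) ^ d * b) = -(a * b) := by
    rw [hn]
    rcases neg_one_pow_eq_or R d with hs | hs <;> rw [pow_succ, hs] <;> ring
  rw [hflip]
  split_ifs <;> first | omega | linarith
termination_by P.support.card
decreasing_by exact eraseLead_support_card_lt (by rintro rfl; simp at h)

theorem pos_leadingCoeff_mul_eval_zero_of_roots_neg {q : ℝ[X]} (h : ∀ y, q.IsRoot y → y < 0) :
    0 < q.leadingCoeff * q.eval 0 := by
  have hroots : ∀ y, (C q.leadingCoeff * q).IsRoot y → y < 0 := by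
    intro y hy
    refine h y ?_
    rcases (by simpa using hy : q = 0 ∨ q.eval y = 0) with rfl | hq
    · simp
    · exact hq
  simpa using zero_lt_eval_of_roots_lt_of_leadingCoeff_nonneg hroots
    (by simpa using mul_self_nonneg q.leadingCoeff)

theorem pos_leadingCoeff_mul_trailingCoeff_of_roots_nonpos {P : ℝ[X]} (hP : P ≠ 0)
    (h : ∀ y, P.IsRoot y → y ≤ 0) : 0 < P.leadingCoeff * P.trailingCoeff := by
  obtain ⟨q, hPq, hq⟩ := exists_eq_pow_rootMultiplicity_mul_and_not_dvd P hP 0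
  rw [map_zero, sub_zero, X_dvd_iff] at hq
  rw [map_zero, sub_zero] at hPq
  have hX : (X ^ rootMultiplicity 0 P : ℝ[X]).trailingCoeff = 1 := by
    rw [trailingCoeff, natTrailingDegree_X_pow, coeff_X_pow_self]
  have hlead : P.leadingCoeff = q.leadingCoeff := by
    rw [hPq, leadingCoeff_mul, leadingCoeff_X_pow, one_mul]
  have htrail : P.trailingCoeff = q.eval 0 := by
    rw [hPq, trailingCoeff_mul, hX, one_mul, trailingCoeff_eq_coeff_zero hq,
      coeff_zero_eq_eval_zero]
  rw [hlead, htrail]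
  refine pos_leadingCoeff_mul_eval_zero_of_roots_neg fun y hy => ?_
  have hy0 : y ≠ 0 := by
    rintro rfl
    exact hq (by rwa [coeff_zero_eq_eval_zero])
  refine lt_of_le_of_ne (h y ?_) hy0
  rw [IsRoot.def, hPq, eval_mul, hy.eq_zero, mul_zero]

theorem trailingCoeff_X_sub_C {R : Type*} [Ring R] {η : R} (hη : η ≠ 0) :
    (X - C η).trailingCoeff = -η := by
  have h0 : (X - C η).coeff 0 = -η := by simp
  rw [trailingCoeff_eq_coeff_zero (h0 ▸ neg_ne_zero.2 hη), h0]

theorem even_countP_pos_roots_iff {P : ℝ[X]} (hP : P ≠ 0) :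
    Even (P.roots.countP (0 < ·)) ↔ 0 < P.leadingCoeff * P.trailingCoeff := by
  by_cases hpos : ∃ η ∈ P.roots, 0 < η
  · obtain ⟨η, hη, hη0⟩ := hpos
    obtain ⟨Q, hPQ⟩ := dvd_iff_isRoot.mpr (isRoot_of_mem_roots hη)
    have hQ : Q ≠ 0 := by rintro rfl; simp [hPQ] at hP
    have ih := even_countP_pos_roots_iff hQ
    have hsign : -η * Q.leadingCoeff * Q.leadingCoeff < 0 := by
      nlinarith [mul_pos hη0 (mul_self_pos.2 (leadingCoeff_ne_zero.2 hQ))]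
    rw [hPQ, roots_mul (hPQ ▸ hP), roots_X_sub_C, Multiset.singleton_add,
      Multiset.countP_cons_of_pos _ hη0, Nat.even_add_one, ih, leadingCoeff_mul,
      leadingCoeff_X_sub_C, one_mul, trailingCoeff_mul, trailingCoeff_X_sub_C hη0.ne',
      show Q.leadingCoeff * (-η * Q.trailingCoeff) = -η * Q.leadingCoeff * Q.trailingCoeff by
        ring,
      mul_pos_iff_not_mul_pos_of_mul_neg hsign (trailingCoeff_nonzero_iff_nonzero.2 hQ)]
  · simp only [not_exists, not_and, not_lt] at hpos
    rw [Multiset.countP_eq_zero.2 fun y hy => (hpos y hy).not_gt]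
    simpa using pos_leadingCoeff_mul_trailingCoeff_of_roots_nonpos hP
      fun y hy => hpos y ((mem_roots hP).2 hy)
termination_by P.natDegree
decreasing_by
  rw [hPQ, natDegree_mul (X_sub_C_ne_zero η) hQ, natDegree_X_sub_C]
  omega

theorem exists_signVariations_eq_countP_pos_roots_add_two_mul {P : ℝ[X]} (hP : P ≠ 0) :
    ∃ r, P.signVariations = P.roots.countP (0 < ·) + 2 * r := by
  have hle := roots_countP_pos_le_signVariations P
  obtain ⟨r, hr⟩ := (Nat.even_sub hle).2
    ((even_signVariations_iff hP).trans (even_countP_pos_roots_iff hP).symm)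
  exact ⟨r, by omega⟩

end Polynomial

theorem stmt_10 (f : Polynomial ℝ) (hf : f ≠ 0) (n : ℕ) (hn : n = f.natDegree)
    (Vplus Vminus Nplus Nminus : ℕ)
    (hVp : Vplus = signChanges ((List.range (n + 1)).map fun i => f.coeff i))
    (hVm : Vminus = signChanges ((List.range (n + 1)).map fun i => (-1 : ℝ) ^ i * f.coeff i))
    (hNp : Nplus = (f.roots.filter (fun a => 0 < a)).card)
    (hNm : Nminus = (f.roots.filter (fun a => a < 0)).card) :
    (∃ rp : ℕ, Vplus = Nplus + 2 * rp) ∧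
    (∃ rm : ℕ, Vminus = Nminus + 2 * rm) ∧
    (Multiset.card f.roots = n → Nplus = Vplus ∧ Nminus = Vminus) := by
  subst hn hVp hVm hNp hNm
  have hVm : signChanges ((List.range (f.natDegree + 1)).map fun i => (-1 : ℝ) ^ i * f.coeff i) =
      (f.comp (-X)).signVariations := by
    rw [signVariations_eq_signChanges, natDegree_comp_neg_X]
    exact congrArg _ (List.map_congr_left fun i _ => (coeff_comp_neg_X f i).symm)
  rw [← signVariations_eq_signChanges, hVm, ← Multiset.countP_eq_card_filter,
    ← Multiset.countP_eq_card_filter, countP_neg_roots_eq_countP_pos_roots_comp_neg_X]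
  obtain ⟨rp, hrp⟩ := exists_signVariations_eq_countP_pos_roots_add_two_mul hf
  obtain ⟨rm, hrm⟩ := exists_signVariations_eq_countP_pos_roots_add_two_mul
    (comp_neg_X_eq_zero_iff.not.2 hf)
  refine ⟨⟨rp, hrp⟩, ⟨rm, hrm⟩, fun hcard => ?_⟩
  have hsum := signVariations_add_signVariations_comp_neg_X_add_natTrailingDegree_le f
  have hsplit := f.roots.card_eq_countP_pos_add_countP_neg_add_count_zero
  rw [hcard, count_zero_roots_eq_natTrailingDegree,
    countP_neg_roots_eq_countP_pos_roots_comp_neg_X] at hsplit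
  omega
end

section
/- Let A be a finite-dimensional commutative algebra over ℝ (or any real closed field K). Then the signature of the trace form Tr_K^A : A × A → K, (f,g) ↦ Tr(λ_{fg}), equals the number of maximal ideals m of A with A/m ≅ K (equivalently, the number of K-algebra homomorphisms A → K). In particular, K is a residue field of A if and only if the signature of the trace form is nonzero. -/
/-- The type `(p, q)` of a symmetric bilinear form on a real vector space, via
Sylvester's law of inertia. -/
def LinearMap.IsTypeOf {V : Type*} [AddCommGroup V] [Module ℝ V]
    (Φ : V →ₗ[ℝ] V →ₗ[ℝ] ℝ) (p q : ℕ) : Prop :=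
  IsGreatest {d : ℕ | ∃ W : Submodule ℝ V, Module.finrank ℝ W = d ∧
      ∀ x ∈ W, x ≠ 0 → 0 < Φ x x} p ∧
  IsGreatest {d : ℕ | ∃ W : Submodule ℝ V, Module.finrank ℝ W = d ∧
      ∀ x ∈ W, x ≠ 0 → Φ x x < 0} q

/-!
Nilpotent elements lie in the kernel of the trace form, and modulo its nilradical `A` is the
product `∏ A ⧸ 𝔪` of its residue fields, each isomorphic to `ℝ` or `ℂ`. Hence the trace of `A`
factors as `τ ∘ π` through `π : A → ∏ A ⧸ 𝔪`, and `τ (e_𝔪) > 0` for the unit `e_𝔪` of each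
factor, since it is the trace of an idempotent lift, i.e. a rank. Lifts of the `e_𝔪` are
pairwise orthogonal with squares `τ (e_𝔪) > 0`; lifts of elements `i_𝔪` with `i_𝔪² = -e_𝔪` in
the complex factors are pairwise orthogonal with squares `-τ (e_𝔪) < 0`; and the two families
span `A` modulo the kernel of the form. A positive definite subspace meets the span of the second
family plus the kernel trivially (and symmetrically), so the form has type
`(#𝔪, #complex 𝔪)`, and `p - q` counts the real residue fields, i.e. the morphisms `A → ℝ`.
-/

open Module Submodule

namespace LinearMap

theorem apply_sum_smul_self_of_isOrthoᵢ {R M ι : Type*} [CommSemiring R] [AddCommMonoid M]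
    [Module R M] [Fintype ι] {B : M →ₗ[R] M →ₗ[R] R} {b : ι → M} (hb : B.IsOrthoᵢ b)
    (c : ι → R) : B (∑ i, c i • b i) (∑ i, c i • b i) = ∑ i, c i ^ 2 * B (b i) (b i) := by
  simp only [map_sum, map_smul, LinearMap.sum_apply, smul_apply, smul_eq_mul]
  refine Finset.sum_congr rfl fun i _ => ?_
  rw [Finset.sum_eq_single i (fun j _ hji => by rw [hb hji, mul_zero]) (by simp)]
  ring

variable {V : Type*} [AddCommGroup V] [Module ℝ V] {Φ : V →ₗ[ℝ] V →ₗ[ℝ] ℝ}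

theorem pos_of_mem_span_of_isOrthoᵢ {ι : Type*} [Finite ι] {b : ι → V} (hb : Φ.IsOrthoᵢ b)
    (hpos : ∀ i, 0 < Φ (b i) (b i)) {x : V} (hx : x ∈ span ℝ (Set.range b)) (hx0 : x ≠ 0) :
    0 < Φ x x := by
  have := Fintype.ofFinite ι
  obtain ⟨c, rfl⟩ := (mem_span_range_iff_exists_fun ℝ).1 hx
  obtain ⟨i, hi⟩ : ∃ i, c i ≠ 0 := by
    by_contra! h
    simp [h] at hx0
  rw [apply_sum_smul_self_of_isOrthoᵢ hb]
  exact Finset.sum_pos' (fun j _ => mul_nonneg (sq_nonneg _) (hpos j).le)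
    ⟨i, Finset.mem_univ i, mul_pos (by positivity) (hpos i)⟩

theorem exists_apply_self_eq_of_mem_sup_ker (hΦ : BilinForm.IsSymm Φ) {S : Submodule ℝ V}
    {x : V} (hx : x ∈ S ⊔ ker Φ) : ∃ y ∈ S, Φ x x = Φ y y := by
  obtain ⟨y, hy, n, hn, rfl⟩ := mem_sup.1 hx
  have hn' : ∀ z, Φ z n = 0 := fun z => by rw [hΦ.eq, mem_ker.1 hn, zero_apply]
  exact ⟨y, hy, by simp [mem_ker.1 hn, hn']⟩

theorem isGreatest_finrank_of_sup_eq_top [FiniteDimensional ℝ V] {P U : Submodule ℝ V}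
    (hP : ∀ x ∈ P, x ≠ 0 → 0 < Φ x x) (hU : ∀ x ∈ U, Φ x x ≤ 0) (hPU : P ⊔ U = ⊤) :
    IsGreatest {d : ℕ | ∃ W : Submodule ℝ V, finrank ℝ W = d ∧ ∀ x ∈ W, x ≠ 0 → 0 < Φ x x}
      (finrank ℝ P) := by
  refine ⟨⟨P, rfl, hP⟩, ?_⟩
  rintro _ ⟨W, rfl, hW⟩
  have hWU : W ⊓ U = ⊥ := eq_bot_iff.2 fun x ⟨hxW, hxU⟩ =>
    (mem_bot ℝ).2 (by_contra fun hx => (hW x hxW hx).not_ge (hU x hxU))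
  have hdimWU := finrank_sup_add_finrank_inf_eq W U
  have hdimPU := finrank_add_le_finrank_add_finrank P U
  rw [hWU, finrank_bot] at hdimWU
  rw [hPU, finrank_top] at hdimPU
  have := finrank_le (W ⊔ U)
  omega

theorem isTypeOf_of_isOrthoᵢ [FiniteDimensional ℝ V] (hΦ : BilinForm.IsSymm Φ) {ι κ : Type*}
    [Finite ι] [Finite κ] {bp : ι → V} {bn : κ → V} (hbp : Φ.IsOrthoᵢ bp) (hbn : Φ.IsOrthoᵢ bn)
    (hpos : ∀ i, 0 < Φ (bp i) (bp i)) (hneg : ∀ k, Φ (bn k) (bn k) < 0)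
    (hspan : span ℝ (Set.range bp) ⊔ span ℝ (Set.range bn) ⊔ ker Φ = ⊤) :
    Φ.IsTypeOf (Nat.card ι) (Nat.card κ) := by
  have := Fintype.ofFinite ι
  have := Fintype.ofFinite κ
  set P := span ℝ (Set.range bp)
  set Q := span ℝ (Set.range bn)
  have hP : ∀ x ∈ P, x ≠ 0 → 0 < Φ x x := fun x => pos_of_mem_span_of_isOrthoᵢ hbp hpos
  have hQ : ∀ x ∈ Q, x ≠ 0 → 0 < (-Φ) x x := fun x =>
    pos_of_mem_span_of_isOrthoᵢ (Φ := -Φ) (fun k l hkl => by simpa [Function.onFun] using hbn hkl)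
      (fun k => by simpa using hneg k)
  have hQN : ∀ x ∈ Q ⊔ ker Φ, Φ x x ≤ 0 := by
    intro x hx
    obtain ⟨y, hy, hxy⟩ := exists_apply_self_eq_of_mem_sup_ker hΦ hx
    rcases eq_or_ne y 0 with rfl | hy0
    · simp [hxy]
    · simpa [hxy] using (hQ y hy hy0).le
  have hPN : ∀ x ∈ P ⊔ ker Φ, (-Φ) x x ≤ 0 := by
    intro x hx
    obtain ⟨y, hy, hxy⟩ := exists_apply_self_eq_of_mem_sup_ker hΦ hx
    rcases eq_or_ne y 0 with rfl | hy0
    · simp [hxy]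
    · simpa [hxy] using (hP y hy hy0).le
  have hfinP : finrank ℝ P = Nat.card ι := by
    rw [finrank_span_eq_card (linearIndependent_of_isOrthoᵢ hbp fun i => (hpos i).ne'),
      Nat.card_eq_fintype_card]
  have hfinQ : finrank ℝ Q = Nat.card κ := by
    rw [finrank_span_eq_card (linearIndependent_of_isOrthoᵢ hbn fun k => (hneg k).ne),
      Nat.card_eq_fintype_card]
  refine ⟨hfinP ▸ isGreatest_finrank_of_sup_eq_top hP hQN (by rwa [← sup_assoc]), ?_⟩
  have hQtype := hfinQ ▸ isGreatest_finrank_of_sup_eq_top hQ hPN (by rwa [← sup_assoc, sup_comm Q])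
  simpa using hQtype

end LinearMap

namespace Algebra

variable {K A B : Type*} [Field K] [CommRing A] [Algebra K A]

theorem trace_eq_zero_of_isNilpotent {x : A} (hx : IsNilpotent x) : trace K A x = 0 :=
  (LinearMap.isNilpotent_trace_of_isNilpotent (hx.map (lmul K A))).eq_zero

theorem restrictScalars_nilradical_le_ker_traceForm :
    (nilradical A).restrictScalars K ≤ LinearMap.ker (traceForm K A) := fun n hn =>
  LinearMap.ext fun y => trace_eq_zero_of_isNilpotent ((Commute.all n y).isNilpotent_mul_right hn)

theorem trace_pos_of_isIdempotentElem [FiniteDimensional K A] [LinearOrder K]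
    [IsStrictOrderedRing K] {e : A} (he : IsIdempotentElem e) (he0 : e ≠ 0) :
    0 < trace K A e := by
  have hl : IsIdempotentElem (lmul K A e) := he.map (lmul K A)
  have hne : trace K A e ≠ 0 := by
    rw [trace_apply, Ne, LinearMap.IsIdempotentElem.trace_eq_zero_iff hl]
    exact fun h => he0 (lmul_injective (h.trans (map_zero _).symm))
  rw [trace_apply, (LinearMap.IsIdempotentElem.isProj_range _ hl).trace] at hne ⊢
  exact lt_of_le_of_ne (Nat.cast_nonneg _) hne.symm

variable [CommRing B] [Algebra K B] {π : A →ₐ[K] B}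

theorem exists_trace_eq_comp_of_surjective (hπ : Function.Surjective π)
    (hker : ∀ x, π x = 0 → IsNilpotent x) : ∃ τ : B →ₗ[K] K, ∀ x, trace K A x = τ (π x) := by
  obtain ⟨s, hs⟩ := π.toLinearMap.exists_rightInverse_of_surjective (LinearMap.range_eq_top.2 hπ)
  refine ⟨trace K A ∘ₗ s, fun x => ?_⟩
  have hπs : π (s (π x)) = π x := LinearMap.congr_fun hs (π x)
  rw [LinearMap.comp_apply, ← sub_eq_zero, ← map_sub]
  exact trace_eq_zero_of_isNilpotent (hker _ (by rw [map_sub, hπs, sub_self]))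

theorem pos_of_isIdempotentElem_of_trace_eq_comp [FiniteDimensional K A] [LinearOrder K]
    [IsStrictOrderedRing K] (hπ : Function.Surjective π) (hker : ∀ x, π x = 0 → IsNilpotent x)
    {τ : B →ₗ[K] K} (hτ : ∀ x, trace K A x = τ (π x)) {e : B} (he : IsIdempotentElem e)
    (he0 : e ≠ 0) : 0 < τ e := by
  obtain ⟨a, ha, rfl⟩ :=
    exists_isIdempotentElem_eq_of_ker_isNilpotent (π : A →+* B) hker e (hπ e) he
  change 0 < τ (π a)
  rw [← hτ]
  exact trace_pos_of_isIdempotentElem ha (by rintro rfl; exact he0 (map_zero π))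

end Algebra

theorem AlgHom.eq_of_ker_eq {R S : Type*} [CommRing R] [Ring S] [Algebra R S]
    {φ ψ : S →ₐ[R] R} (h : RingHom.ker φ = RingHom.ker ψ) : φ = ψ := by
  ext x
  have : x - algebraMap R S (φ x) ∈ RingHom.ker ψ := h ▸ by simp
  rw [RingHom.mem_ker, map_sub, AlgHom.commutes, sub_eq_zero] at this
  exact this.symm

attribute [local instance] Ideal.Quotient.field

namespace MaximalSpectrum

variable (K A : Type*) [Field K] [CommRing A] [Algebra K A]

noncomputable def toPiQuotient : A →ₐ[K] ∀ I : MaximalSpectrum A, A ⧸ I.asIdeal :=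
  AlgHom.pi fun I => Ideal.Quotient.mkₐ K I.asIdeal

variable {K A} in
theorem toPiQuotient_surjective [IsArtinianRing A] : Function.Surjective (toPiQuotient K A) := by
  intro y
  obtain ⟨z, rfl⟩ := (IsArtinianRing.quotNilradicalEquivPi A).surjective y
  obtain ⟨x, rfl⟩ := Ideal.Quotient.mk_surjective z
  exact ⟨x, rfl⟩

variable {K A} in
theorem isNilpotent_of_toPiQuotient_eq_zero [IsArtinianRing A] {x : A}
    (hx : toPiQuotient K A x = 0) : IsNilpotent x := by
  rw [← mem_nilradical, IsArtinianRing.nilradical_eq_iInf, Ideal.mem_iInf]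
  exact fun I => Ideal.Quotient.eq_zero_iff_mem.1 (congrFun hx I)

noncomputable def algHomEquiv :
    (A →ₐ[K] K) ≃ {I : MaximalSpectrum A // Nonempty (A ⧸ I.asIdeal →ₐ[K] K)} :=
  Equiv.ofBijective
    (fun φ => ⟨⟨RingHom.ker φ, RingHom.ker_isMaximal_of_surjective φ
      fun c => ⟨algebraMap K A c, φ.commutes c⟩⟩, ⟨Ideal.Quotient.liftₐ _ φ fun _ h => h⟩⟩)
    ⟨fun φ ψ h => AlgHom.eq_of_ker_eq (congrArg (fun I => I.1.asIdeal) h), by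
      rintro ⟨I, ⟨ψ⟩⟩
      refine ⟨ψ.comp (Ideal.Quotient.mkₐ K I.asIdeal), Subtype.ext (MaximalSpectrum.ext ?_)⟩
      ext x
      simp [map_eq_zero_iff ψ ψ.toRingHom.injective, Ideal.Quotient.eq_zero_iff_mem]⟩

theorem natCard_eq_natCard_algHom_add [Finite (MaximalSpectrum A)] :
    Nat.card (MaximalSpectrum A) = Nat.card (A →ₐ[K] K) +
      Nat.card {I : MaximalSpectrum A // IsEmpty (A ⧸ I.asIdeal →ₐ[K] K)} := by
  classical
  rw [← Nat.card_congr (Equiv.sumCompl fun I : MaximalSpectrum A =>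
      Nonempty (A ⧸ I.asIdeal →ₐ[K] K)), Nat.card_sum, Nat.card_congr (algHomEquiv K A),
    Nat.card_congr (Equiv.subtypeEquivRight fun _ => not_nonempty_iff)]

end MaximalSpectrum

theorem span_one_eq_top_of_algHom {K F : Type*} [Field K] [Field F] [Algebra K F]
    (φ : F →ₐ[K] K) : span K {(1 : F)} = ⊤ := by
  refine eq_top_iff.2 fun z _ => mem_span_singleton.2 ⟨φ z, φ.toRingHom.injective ?_⟩
  simp

theorem Real.exists_mul_self_eq_neg_one_span_eq_top {F : Type*} [Field F] [Algebra ℝ F]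
    [FiniteDimensional ℝ F] (hF : IsEmpty (F →ₐ[ℝ] ℝ)) :
    ∃ v : F, v * v = -1 ∧ span ℝ {1, v} = ⊤ := by
  obtain ⟨⟨e⟩⟩ | ⟨⟨e⟩⟩ := Real.nonempty_algEquiv_or F
  · exact hF.elim e.toAlgHom
  refine ⟨e.symm Complex.I, by rw [← map_mul, Complex.I_mul_I, map_neg, map_one], ?_⟩
  have := congrArg (map e.symm.toLinearMap) (RCLike.span_one_I (K := ℂ))
  simpa [map_span, Set.image_pair] using this

theorem Pi.span_single_one_sup_span_single_eq_top {K ι : Type*} [Field K] [Finite ι]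
    [DecidableEq ι] {F : ι → Type*} [∀ i, Field (F i)] [∀ i, Algebra K (F i)]
    (v : ∀ k : {i // IsEmpty (F i →ₐ[K] K)}, F k.1) (hv : ∀ k, span K {1, v k} = ⊤) :
    span K (Set.range fun i => Pi.single i 1) ⊔ span K (Set.range fun k => Pi.single k.1 (v k))
      = ⊤ := by
  refine eq_top_iff.2 ((LinearMap.iSup_range_single (R := K) (φ := F)).symm.le.trans
    (iSup_le fun i => ?_))
  rintro _ ⟨z, rfl⟩
  rw [LinearMap.single_apply]
  rcases isEmpty_or_nonempty (F i →ₐ[K] K) with hi | ⟨⟨φ⟩⟩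
  · obtain ⟨c, d, rfl⟩ :=
      mem_span_pair.1 ((hv ⟨i, hi⟩).symm ▸ mem_top : z ∈ span K {1, v ⟨i, hi⟩})
    rw [Pi.single_add, Pi.single_smul, Pi.single_smul]
    exact add_mem (mem_sup_left (smul_mem _ _ (subset_span ⟨i, rfl⟩)))
      (mem_sup_right (smul_mem _ _ (subset_span ⟨⟨i, hi⟩, rfl⟩)))
  · obtain ⟨c, rfl⟩ :=
      mem_span_singleton.1 ((span_one_eq_top_of_algHom φ).symm ▸ mem_top : z ∈ span K {1})
    rw [Pi.single_smul]
    exact mem_sup_left (smul_mem _ _ (subset_span ⟨i, rfl⟩))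

open Algebra MaximalSpectrum in
theorem Algebra.traceForm_isTypeOf (A : Type*) [CommRing A] [Algebra ℝ A]
    [FiniteDimensional ℝ A] :
    (traceForm ℝ A).IsTypeOf (Nat.card (MaximalSpectrum A))
      (Nat.card {I : MaximalSpectrum A // IsEmpty (A ⧸ I.asIdeal →ₐ[ℝ] ℝ)}) := by
  classical
  have : IsArtinianRing A := IsArtinianRing.of_finite ℝ A
  have hπ := toPiQuotient_surjective (K := ℝ) (A := A)
  have hker : ∀ x, toPiQuotient ℝ A x = 0 → IsNilpotent x := fun _ =>
    isNilpotent_of_toPiQuotient_eq_zero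
  obtain ⟨τ, hτ⟩ := exists_trace_eq_comp_of_surjective hπ hker
  set lift := Function.surjInv hπ
  have hΦ : ∀ y z, traceForm ℝ A (lift y) (lift z) = τ (y * z) := fun y z => by
    rw [traceForm_apply, hτ, map_mul, Function.surjInv_eq hπ, Function.surjInv_eq hπ]
  have horth : ∀ {I J : MaximalSpectrum A} (a : A ⧸ I.asIdeal) (b : A ⧸ J.asIdeal), I ≠ J →
      traceForm ℝ A (lift (Pi.single I a)) (lift (Pi.single J b)) = 0 := fun a b h => by
    rw [hΦ, ← Pi.single_mul_left, Pi.single_eq_of_ne h, mul_zero, Pi.single_zero, map_zero]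
  have hpos : ∀ I, 0 < τ (Pi.single I 1) := fun I =>
    pos_of_isIdempotentElem_of_trace_eq_comp hπ hker hτ
      (by rw [IsIdempotentElem, ← Pi.single_mul, one_mul]) (Pi.single_ne_zero_iff.2 one_ne_zero)
  choose v hv hspan using fun k : {I : MaximalSpectrum A // IsEmpty (A ⧸ I.asIdeal →ₐ[ℝ] ℝ)} =>
    Real.exists_mul_self_eq_neg_one_span_eq_top k.2
  refine LinearMap.isTypeOf_of_isOrthoᵢ (traceForm_isSymm ℝ)
    (bp := fun I => lift (Pi.single I 1)) (bn := fun k => lift (Pi.single k.1 (v k)))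
    (fun I J h => horth _ _ h) (fun k l h => horth _ _ (Subtype.coe_injective.ne h))
    (fun I => by rw [hΦ, ← Pi.single_mul, one_mul]; exact hpos I)
    (fun k => by rw [hΦ, ← Pi.single_mul, hv, Pi.single_neg, map_neg, neg_lt_zero]; exact hpos k.1)
    ?_
  have hker' : LinearMap.ker (toPiQuotient ℝ A).toLinearMap ≤ LinearMap.ker (traceForm ℝ A) :=
    fun x hx => restrictScalars_nilradical_le_ker_traceForm (hker x hx)
  refine top_le_iff.1 (le_trans ?_ (sup_le_sup_left hker' _))
  rw [top_le_iff, ← LinearMap.map_eq_top_iff (LinearMap.range_eq_top.2 hπ), Submodule.map_sup,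
    Submodule.map_span, Submodule.map_span, ← Set.range_comp, ← Set.range_comp]
  simp only [Function.comp_def, AlgHom.toLinearMap_apply, lift, Function.surjInv_eq hπ]
  exact Pi.span_single_one_sup_span_single_eq_top v hspan

theorem stmt_12 (A : Type*) [CommRing A] [Algebra ℝ A] [FiniteDimensional ℝ A]
    (p q : ℕ) (hT : (Algebra.traceForm ℝ A).IsTypeOf p q) :
    (p : ℤ) - q = Nat.card (A →ₐ[ℝ] ℝ) ∧
    (Nonempty (A →ₐ[ℝ] ℝ) ↔ p ≠ q) := by
  have : IsArtinianRing A := IsArtinianRing.of_finite ℝ A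
  obtain rfl := hT.1.unique (Algebra.traceForm_isTypeOf A).1
  obtain rfl := hT.2.unique (Algebra.traceForm_isTypeOf A).2
  have hcard := MaximalSpectrum.natCard_eq_natCard_algHom_add ℝ A
  have : Finite (A →ₐ[ℝ] ℝ) := .of_equiv _ (MaximalSpectrum.algHomEquiv ℝ A).symm
  refine ⟨by rw [hcard]; push_cast; ring, ?_⟩
  rw [← Finite.card_pos_iff]
  omega
end

section
/- Let A be a finite-dimensional commutative algebra over ℝ (or a real closed field K). The trace form Tr_K^A is positive definite if and only if A is isomorphic as a K-algebra to K^{dim_K A}. -/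
/-!
A positive definite trace form makes `A` formally real, since `Tr (∑ xᵢ²) = ∑ Tr (xᵢ²)` vanishes
only when every `xᵢ` does. A formally real ring is reduced, so the Artinian ring `A` is the product
of its residue fields `A ⧸ m`. Each of them is again formally real, being a factor of `A`, and
finite over `ℝ`; it embeds into `ℂ` but cannot contain a square root of `-1`, hence is `ℝ`.
Conversely, on `K^n` the trace form is `x ↦ ∑ xᵢ²`.
-/

open Module

namespace IsFormallyReal

theorem of_injective {S R : Type*} [NonUnitalNonAssocSemiring S] [NonUnitalNonAssocSemiring R]
    [IsFormallyReal R] (f : S →ₙ+* R) (hf : Function.Injective f) : IsFormallyReal S where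
  not_isSumNonzeroSq_zero h := by
    have map_isSumNonzeroSq {s : S} (hs : IsSumNonzeroSq s) : IsSumNonzeroSq (f s) := by
      induction hs with
      | sq ha => simpa using IsSumNonzeroSq.sq ((map_ne_zero_iff f hf).mpr ha)
      | sq_add ha _ ih => simpa using IsSumNonzeroSq.sq_add ((map_ne_zero_iff f hf).mpr ha) ih
    exact not_isSumNonzeroSq_zero (by simpa using map_isSumNonzeroSq h)

theorem of_pi {ι : Type*} [DecidableEq ι] {F : ι → Type*}
    [∀ i, NonUnitalNonAssocSemiring (F i)]
    [IsFormallyReal (∀ i, F i)] (i : ι) : IsFormallyReal (F i) :=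
  of_injective
    { toFun := Pi.single i
      map_zero' := Pi.single_zero i
      map_add' := Pi.single_add i
      map_mul' := Pi.single_mul i }
    (Pi.single_injective i)

end IsFormallyReal

namespace Algebra

theorem isFormallyReal_of_traceForm_pos {K A : Type*} [CommRing K] [PartialOrder K]
    [IsOrderedRing K] [CommRing A] [Algebra K A]
    (h : ∀ x : A, x ≠ 0 → 0 < traceForm K A x x) : IsFormallyReal A := by
  have trace_mul_self_nonneg (a : A) : 0 ≤ trace K A (a * a) := by
    rcases eq_or_ne a 0 with rfl | ha
    · simp
    · exact (h a ha).le
  have trace_nonneg {s : A} (hs : IsSumSq s) : 0 ≤ trace K A s := by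
    induction hs with
    | zero => simp
    | sq_add a _ ih => rw [map_add]; exact add_nonneg (trace_mul_self_nonneg a) ih
  refine .of_eq_zero_of_eq_zero_of_mul_self_add fun {s a} hs has => ?_
  by_contra ha
  have hpos : 0 < trace K A (a * a) + trace K A s :=
    add_pos_of_pos_of_nonneg (h a ha) (trace_nonneg hs)
  rw [← map_add, has, map_zero] at hpos
  exact hpos.false

theorem trace_pi_self {K ι : Type*} [CommRing K] [Fintype ι] (x : ι → K) :
    trace K (ι → K) x = ∑ i, x i := by
  classical
  rw [trace_eq_matrix_trace (Pi.basisFun K ι)]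
  simp [Matrix.trace, leftMulMatrix_apply]

theorem traceForm_self_pos_of_algEquiv_pi {K A ι : Type*} [CommRing K] [LinearOrder K]
    [IsStrictOrderedRing K] [CommRing A] [Algebra K A] [Fintype ι] (e : A ≃ₐ[K] (ι → K))
    {x : A} (hx : x ≠ 0) : 0 < traceForm K A x x := by
  rw [traceForm_apply, ← trace_eq_of_algEquiv e, map_mul, trace_pi_self]
  obtain ⟨i, hi⟩ := Function.ne_iff.mp ((map_ne_zero_iff e e.injective).mpr hx)
  exact Finset.sum_pos' (fun j _ => mul_self_nonneg (e x j))
    ⟨i, Finset.mem_univ i, mul_self_pos.mpr hi⟩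

end Algebra

theorem AlgEquiv.nonempty_algEquiv_fin_finrank_pi {K A ι : Type*} [Field K] [Ring A]
    [Algebra K A] [Finite ι] (e : A ≃ₐ[K] (ι → K)) :
    Nonempty (A ≃ₐ[K] (Fin (finrank K A) → K)) := by
  have : Fintype ι := Fintype.ofFinite ι
  have hcard : Fintype.card ι = finrank K A := by
    rw [e.toLinearEquiv.finrank_eq, Module.finrank_fintype_fun_eq_card]
  exact ⟨e.trans (AlgEquiv.piCongrLeft' K (fun _ => K) (Fintype.equivFinOfCardEq hcard))⟩

theorem Real.finrank_eq_one_of_isFormallyReal (F : Type*) [Field F] [Algebra ℝ F]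
    [FiniteDimensional ℝ F] [IsFormallyReal F] : finrank ℝ F = 1 := by
  let φ : F →ₐ[ℝ] ℂ := IsAlgClosed.lift
  have hle : finrank ℝ F ≤ 2 := by
    simpa using LinearMap.finrank_le_finrank_of_injective (f := φ.toLinearMap) φ.injective
  have hpos : 0 < finrank ℝ F := finrank_pos
  by_contra hne
  have hsurj : Function.Surjective φ :=
    (LinearMap.injective_iff_surjective_of_finrank_eq_finrank (f := φ.toLinearMap)
      (by simp; omega)).mp φ.injective
  obtain ⟨z, hz⟩ := hsurj Complex.I
  have hz0 : z ≠ 0 := fun hz0 => Complex.I_ne_zero (by rw [← hz, hz0, map_zero])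
  have hsum : 1 * 1 + z * z = 0 := φ.injective (by simp [hz])
  exact IsFormallyReal.not_isSumNonzeroSq_zero
    (hsum ▸ IsSumNonzeroSq.sq_add one_ne_zero (IsSumNonzeroSq.sq hz0))

theorem Real.nonempty_algEquiv_fin_finrank_pi_of_isFormallyReal (A : Type*) [CommRing A]
    [Algebra ℝ A] [FiniteDimensional ℝ A] [IsFormallyReal A] :
    Nonempty (A ≃ₐ[ℝ] (Fin (finrank ℝ A) → ℝ)) := by
  classical
  have : IsArtinianRing A := IsArtinianRing.of_finite ℝ A
  let e : A ≃ₐ[ℝ] ∀ m : MaximalSpectrum A, A ⧸ m.asIdeal :=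
    (IsArtinianRing.equivPi A).restrictScalars ℝ
  have : IsFormallyReal (∀ m : MaximalSpectrum A, A ⧸ m.asIdeal) :=
    .of_injective (e.symm : _ →+* A).toNonUnitalRingHom e.symm.injective
  have residue_equiv (m : MaximalSpectrum A) : Nonempty (ℝ ≃ₐ[ℝ] A ⧸ m.asIdeal) := by
    let := Ideal.Quotient.field m.asIdeal
    have := IsFormallyReal.of_pi (F := fun m : MaximalSpectrum A => A ⧸ m.asIdeal) m
    exact nonempty_algEquiv_iff_finrank_eq_one.mpr
      (Real.finrank_eq_one_of_isFormallyReal (A ⧸ m.asIdeal))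
  exact (e.trans (AlgEquiv.piCongrRight fun m => (residue_equiv m).some.symm)
    ).nonempty_algEquiv_fin_finrank_pi

theorem stmt_14 (A : Type*) [CommRing A] [Algebra ℝ A] [FiniteDimensional ℝ A] :
    (∀ x : A, x ≠ 0 → 0 < Algebra.traceForm ℝ A x x) ↔
      Nonempty (A ≃ₐ[ℝ] (Fin (Module.finrank ℝ A) → ℝ)) := by
  refine ⟨fun h => ?_, fun ⟨e⟩ _ hx => Algebra.traceForm_self_pos_of_algEquiv_pi e hx⟩
  have := Algebra.isFormallyReal_of_traceForm_pos h
  exact Real.nonempty_algEquiv_fin_finrank_pi_of_isFormallyReal A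
end

section
/- Let A be a finite-dimensional commutative algebra over ℝ (or a real closed field K), α : A → K a K-linear form, and Φ_α the symmetric bilinear form Φ_α(f,g) = α(fg). If the signature of Φ_α is nonzero, then there exists a K-algebra homomorphism A → K (i.e., A has a K-rational point). -/
open Polynomial

theorem LinearMap.IsTypeOf.eq_of_linearEquiv_neg {V : Type*} [AddCommGroup V] [Module ℝ V]
    {Φ : V →ₗ[ℝ] V →ₗ[ℝ] ℝ} {p q : ℕ} (hT : Φ.IsTypeOf p q) (e : V ≃ₗ[ℝ] V)
    (he : ∀ x, Φ (e x) (e x) = -Φ x x) : p = q := by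
  have image_sign : ∀ (W : Submodule ℝ V) (x : V), x ∈ W.map e.toLinearMap → x ≠ 0 →
      ∃ y ∈ W, y ≠ 0 ∧ Φ x x = -Φ y y := by
    rintro W _ ⟨y, hy, rfl⟩ hx
    exact ⟨y, hy, fun h ↦ hx (by simp [h]), he y⟩
  apply le_antisymm
  · obtain ⟨W, rfl, hW⟩ := hT.1.1
    refine hT.2.2 ⟨W.map e.toLinearMap, LinearEquiv.finrank_map_eq e W, fun x hx hx0 ↦ ?_⟩
    obtain ⟨y, hy, hy0, hxy⟩ := image_sign W x hx hx0
    linarith [hW y hy hy0]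
  · obtain ⟨W, rfl, hW⟩ := hT.2.1
    refine hT.1.2 ⟨W.map e.toLinearMap, LinearEquiv.finrank_map_eq e W, fun x hx hx0 ↦ ?_⟩
    obtain ⟨y, hy, hy0, hxy⟩ := image_sign W x hx hx0
    linarith [hW y hy hy0]

theorem LinearMap.IsTypeOf.eq_of_sq_eq_neg_one {A : Type*} [CommRing A] [Algebra ℝ A]
    {α : A →ₗ[ℝ] ℝ} {Φ : A →ₗ[ℝ] A →ₗ[ℝ] ℝ} (hΦ : ∀ f g : A, Φ f g = α (f * g))
    {p q : ℕ} (hT : Φ.IsTypeOf p q) {j : A} (hj : j ^ 2 = -1) : p = q := by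
  have hunit : IsUnit j := .of_mul_eq_one (-j) (by linear_combination -hj)
  refine hT.eq_of_linearEquiv_neg (hunit.unit.mulLeftLinearEquiv ℝ A) fun x ↦ ?_
  have : j * x * (j * x) = -(x * x) := by linear_combination x * x * hj
  simp [hΦ, this]

theorem exists_sq_eq_neg_one_of_isNilpotent {R : Type*} [CommRing R] (h2 : IsUnit (2 : R))
    {a : R} (ha : IsNilpotent (a ^ 2 + 1)) : ∃ j : R, j ^ 2 = -1 := by
  have ha_unit : IsUnit a := by
    have : IsUnit (1 - (a ^ 2 + 1)) := ha.isUnit_one_sub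
    rw [show 1 - (a ^ 2 + 1) = -a ^ 2 by ring, IsUnit.neg_iff] at this
    exact isUnit_pow_iff two_ne_zero |>.mp this
  obtain ⟨j, -, hj⟩ := existsUnique_nilpotent_sub_and_aeval_eq_zero (P := (X ^ 2 + 1 : R[X]))
    (x := a) (by simpa using ha) (by simpa [one_add_one_eq_two] using h2.mul ha_unit) |>.exists
  exact ⟨j, by simpa [add_eq_zero_iff_eq_neg] using hj⟩

theorem exists_sq_eq_neg_one_of_isEmpty_algHom_field {L : Type*} [Field L] [Algebra ℝ L]
    [FiniteDimensional ℝ L] (h : IsEmpty (L →ₐ[ℝ] ℝ)) : ∃ i : L, i ^ 2 = -1 := by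
  let ψ : L →ₐ[ℝ] ℂ := IsAlgClosed.lift
  have hψ : Function.Injective ψ := ψ.toRingHom.injective
  have hle : Module.finrank ℝ L ≤ 2 := Complex.finrank_real_complex ▸
    LinearMap.finrank_le_finrank_of_injective (f := ψ.toLinearMap) hψ
  obtain hL | hL : Module.finrank ℝ L = 1 ∨ Module.finrank ℝ L = 2 := by
    have := Module.finrank_pos (R := ℝ) (M := L); omega
  · exact h.elim (AlgEquiv.ofBijective (Algebra.ofId ℝ L)
      (Algebra.finrank_eq_one_iff_bijective_algebraMap.mp hL)).symm
  · have hbij : Function.Bijective ψ :=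
      ⟨hψ, (LinearMap.injective_iff_surjective_of_finrank_eq_finrank (f := ψ.toLinearMap)
        (hL.trans Complex.finrank_real_complex.symm)).mp hψ⟩
    exact ⟨(AlgEquiv.ofBijective ψ hbij).symm Complex.I, by simp [← map_pow]⟩

theorem exists_sq_eq_neg_one_of_isEmpty_algHom {A : Type*} [CommRing A] [Algebra ℝ A]
    [FiniteDimensional ℝ A] (h : IsEmpty (A →ₐ[ℝ] ℝ)) : ∃ j : A, j ^ 2 = -1 := by
  have : IsArtinianRing A := isArtinian_of_tower ℝ inferInstance
  have residue : ∀ I : MaximalSpectrum A, ∃ i : A ⧸ I.asIdeal, i ^ 2 = -1 := fun I ↦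
    let := Ideal.Quotient.field I.asIdeal
    exists_sq_eq_neg_one_of_isEmpty_algHom_field ⟨fun φ ↦ h.elim (φ.comp (Ideal.Quotient.mkₐ ℝ _))⟩
  choose i hi using residue
  let E := IsArtinianRing.quotNilradicalEquivPi A
  obtain ⟨a, ha⟩ := Ideal.Quotient.mk_surjective (E.symm i)
  have h2 : IsUnit (2 : A) :=
    map_ofNat (algebraMap ℝ A) 2 ▸ (isUnit_iff_ne_zero.mpr two_ne_zero).map (algebraMap ℝ A)
  refine exists_sq_eq_neg_one_of_isNilpotent h2 (a := a) ?_
  have hi' : i ^ 2 = -1 := funext hi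
  rw [← mem_nilradical, ← Ideal.Quotient.eq_zero_iff_mem, map_add, map_pow, map_one, ha,
    ← map_pow, hi', map_neg, map_one, neg_add_cancel]

theorem stmt_16 (A : Type*) [CommRing A] [Algebra ℝ A] [FiniteDimensional ℝ A]
    (α : A →ₗ[ℝ] ℝ) (Φ : A →ₗ[ℝ] A →ₗ[ℝ] ℝ)
    (hΦ : ∀ f g : A, Φ f g = α (f * g))
    (p q : ℕ) (hT : Φ.IsTypeOf p q) (hsign : p ≠ q) :
    Nonempty (A →ₐ[ℝ] ℝ) := by
  by_contra h
  obtain ⟨j, hj⟩ := exists_sq_eq_neg_one_of_isEmpty_algHom (not_nonempty_iff.mp h)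
  exact hsign (hT.eq_of_sq_eq_neg_one hΦ hj)
end

section
/- Let g ∈ ℝ[X] be monic and squarefree with roots a₁,…,a_r ∈ ℝ and z₁, z̄₁, …, z_s, z̄_s ∈ ℂ ∖ ℝ, let A = ℝ[X]/⟨g⟩, and let H ∈ ℝ[X] with image h in A. Then the generalized trace form Φ_h(f,f') = Tr_ℝ^A(h f f') has signature equal to #{i : H(aᵢ) > 0} − #{i : H(aᵢ) < 0}, and rank equal to the number of roots z of g in ℂ with H(z) ≠ 0. -/
open Polynomial

/-!
Over `ℂ` the polynomial `g` splits with simple roots, and the Lagrange polynomials `L_z` at the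
complex roots diagonalise multiplication in `ℂ[X]/(g)`; since the trace of `A = ℝ[X]/(g)` agrees
with that of its complexification, `Tr(F mod g) = ∑_z F(z)` and hence
`Φ_h(f, f') = ∑_z H(z) f(z) f'(z)`. The real polynomials `Re(κ_z L_z)` then form a
`Φ_h`-orthogonal basis of `A`: a real root `a` contributes the diagonal entry `H(a)`, and for a
pair `z, z̄` of non-real roots the unit `κ_z` can be chosen so that the pair contributes
`‖H(z)‖/2` and `-‖H(z)‖/2`. Sylvester's law of inertia reads the type `(p, q)` off these
diagonal entries.
-/

open ComplexConjugate

namespace Polynomial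

variable {K : Type*} [Field K] {f : K[X]} {z w : K}

noncomputable def lagrangeAtRoot (f : K[X]) (z : K) : K[X] :=
  C (f.derivative.eval z)⁻¹ * (f /ₘ (X - C z))

theorem X_sub_C_mul_lagrangeAtRoot (hz : f.IsRoot z) :
    (X - C z) * lagrangeAtRoot f z = C (f.derivative.eval z)⁻¹ * f := by
  rw [lagrangeAtRoot, mul_left_comm, mul_divByMonic_eq_iff_isRoot.mpr hz]

theorem mk_mul_mk_lagrangeAtRoot (hz : f.IsRoot z) (P : K[X]) :
    AdjoinRoot.mk f P * AdjoinRoot.mk f (lagrangeAtRoot f z) =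
      P.eval z • AdjoinRoot.mk f (lagrangeAtRoot f z) := by
  rw [AdjoinRoot.smul_mk, ← map_mul, AdjoinRoot.mk_eq_mk]
  obtain ⟨k, hk⟩ : X - C z ∣ P - C (P.eval z) := dvd_iff_isRoot.mpr (by simp)
  refine ⟨k * C (f.derivative.eval z)⁻¹, ?_⟩
  rw [smul_eq_C_mul, ← sub_mul, hk, mul_comm (X - C z) k, mul_assoc,
    X_sub_C_mul_lagrangeAtRoot hz]
  ring

variable [DecidableEq K]

theorem eval_lagrangeAtRoot (hf : f.Separable) (hz : f.IsRoot z) (hw : f.IsRoot w) :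
    (lagrangeAtRoot f z).eval w = if w = z then 1 else 0 := by
  have hq : (X - C z) * (f /ₘ (X - C z)) = f := mul_divByMonic_eq_iff_isRoot.mpr hz
  split_ifs with hwz
  · subst hwz
    have hder := congrArg (eval w ∘ derivative) hq
    simp only [Function.comp_apply, derivative_mul, derivative_sub, derivative_X, derivative_C,
      sub_zero, one_mul, eval_add, eval_mul, eval_sub, eval_X, eval_C, sub_self, zero_mul,
      add_zero] at hder
    rw [lagrangeAtRoot, eval_mul, eval_C, hder]
    exact inv_mul_cancel₀ (hf.eval₂_derivative_ne_zero (RingHom.id K) hz)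
  · have hval := congrArg (eval w) hq
    rw [hw.eq_zero, eval_mul, eval_sub, eval_X, eval_C] at hval
    rw [lagrangeAtRoot, eval_mul,
      (mul_eq_zero.mp hval).resolve_left (sub_ne_zero.mpr hwz), mul_zero]

theorem linearIndependent_mk_lagrangeAtRoot (hf : f.Separable) :
    LinearIndependent K fun z : f.roots.toFinset => AdjoinRoot.mk f (lagrangeAtRoot f z) := by
  rw [Fintype.linearIndependent_iff]
  intro c hc j
  have root_of_mem {z : K} (hz : z ∈ f.roots.toFinset) : f.IsRoot z :=
    (mem_roots hf.ne_zero).mp (Multiset.mem_toFinset.mp hz)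
  have hj := congrArg
    (AdjoinRoot.liftAlgHom f (AlgHom.id K K) (j : K) (by simpa using root_of_mem j.2)) hc
  simp only [map_sum, map_smul, AdjoinRoot.liftAlgHom_mk, map_zero] at hj
  rw [Finset.sum_eq_single j (fun i _ hij => ?_) (by simp)] at hj
  · simpa [eval_lagrangeAtRoot hf (root_of_mem j.2) (root_of_mem j.2)] using hj
  · simp [eval_lagrangeAtRoot hf (root_of_mem i.2) (root_of_mem j.2),
      Subtype.ext_iff.not.mp hij.symm]

end Polynomial

namespace AdjoinRoot

theorem trace_mk_eq_sum_coeff_modByMonic {R : Type*} [CommRing R] {f : R[X]} (hf : f.Monic)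
    (F : R[X]) :
    Algebra.trace R (AdjoinRoot f) (mk f F) =
      ∑ i ∈ Finset.range f.natDegree, (F * X ^ i %ₘ f).coeff i := by
  rw [Algebra.trace_eq_matrix_trace (powerBasis' hf).basis, Matrix.trace,
    ← Fin.sum_univ_eq_sum_range]
  refine Finset.sum_congr rfl fun i _ => ?_
  rw [Matrix.diag, Algebra.leftMulMatrix_eq_repr_mul, PowerBasis.basis_eq_pow,
    powerBasis'_gen]
  refine (powerBasisAux'_repr_apply_to_fun hf _ i).trans ?_
  rw [← mk_X, ← map_pow, ← map_mul, modByMonicHom_mk]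

theorem trace_mk_map {R S : Type*} [CommRing R] [CommRing S] [Nontrivial S] [Algebra R S]
    {f : R[X]} (hf : f.Monic) (F : R[X]) :
    Algebra.trace S (AdjoinRoot (f.map (algebraMap R S))) (mk _ (F.map (algebraMap R S))) =
      algebraMap R S (Algebra.trace R (AdjoinRoot f) (mk f F)) := by
  rw [trace_mk_eq_sum_coeff_modByMonic hf, trace_mk_eq_sum_coeff_modByMonic (hf.map _),
    hf.natDegree_map, map_sum]
  refine Finset.sum_congr rfl fun i _ => ?_
  rw [← Polynomial.map_X (algebraMap R S), ← Polynomial.map_pow, ← Polynomial.map_mul,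
    ← map_modByMonic _ hf, coeff_map]

variable {K : Type*} [Field K] [DecidableEq K] {f : K[X]}

theorem trace_mk_eq_sum_roots (hf : f.Monic) (hsep : f.Separable)
    (hsplit : f.Splits) (P : K[X]) :
    Algebra.trace K (AdjoinRoot f) (mk f P) = ∑ z ∈ f.roots.toFinset, P.eval z := by
  have := hf.finite_adjoinRoot
  have hcard : Fintype.card f.roots.toFinset = Module.finrank K (AdjoinRoot f) := by
    rw [Fintype.card_coe, Multiset.toFinset_card_of_nodup (nodup_roots hsep),
      ← hsplit.natDegree_eq_card_roots, (powerBasis' hf).finrank]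
    rfl
  let b := basisOfLinearIndependentOfCardEqFinrank' _
    (Polynomial.linearIndependent_mk_lagrangeAtRoot hsep) hcard
  rw [Algebra.trace_eq_matrix_trace b, Matrix.trace, ← Finset.sum_coe_sort f.roots.toFinset]
  refine Finset.sum_congr rfl fun z _ => ?_
  have hz : f.IsRoot z := (mem_roots hf.ne_zero).mp (Multiset.mem_toFinset.mp z.2)
  have hbz : b z = mk f (lagrangeAtRoot f z) :=
    congrFun (coe_basisOfLinearIndependentOfCardEqFinrank' ..) z
  rw [Matrix.diag, Algebra.leftMulMatrix_eq_repr_mul, hbz,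
    Polynomial.mk_mul_mk_lagrangeAtRoot hz, ← hbz, map_smul, Module.Basis.repr_self,
    Finsupp.smul_single_one, Finsupp.single_eq_same]

end AdjoinRoot

namespace LinearMap.IsTypeOf

variable {V : Type*} [AddCommGroup V] [Module ℝ V] {Φ : V →ₗ[ℝ] V →ₗ[ℝ] ℝ} {p q : ℕ}

theorem eq_sigPos_sigNeg [FiniteDimensional ℝ V] (hT : Φ.IsTypeOf p q) :
    p = sigPos (BilinMap.toQuadraticMap Φ) ∧ q = sigNeg (BilinMap.toQuadraticMap Φ) := by
  have posDef_iff (Q : QuadraticForm ℝ V) (W : Submodule ℝ V) :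
      (Q.restrict W).PosDef ↔ ∀ x ∈ W, x ≠ 0 → 0 < Q x := by
    simp [QuadraticMap.PosDef, Subtype.forall]
  refine ⟨hT.1.unique ?_, hT.2.unique ?_⟩
  · simpa [posDef_iff] using sigPos_isGreatest (BilinMap.toQuadraticMap Φ)
  · simpa [posDef_iff] using sigNeg_isGreatest (BilinMap.toQuadraticMap Φ)

theorem eq_ncard_of_basis {ι : Type*} [Fintype ι] (hT : Φ.IsTypeOf p q)
    (b : Module.Basis ι ℝ V) (hb : Pairwise fun i j => Φ (b i) (b j) = 0) :
    p = {i | 0 < Φ (b i) (b i)}.ncard ∧ q = {i | Φ (b i) (b i) < 0}.ncard := by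
  have := Module.Finite.of_basis b
  set Q := BilinMap.toQuadraticMap Φ
  have hortho : (QuadraticMap.associated (R := ℝ) Q).IsOrthoᵢ b := fun i j hij => by
    simp [Q, QuadraticMap.associated_toQuadraticMap, Function.onFun, hb hij, hb hij.symm]
  have hQ : QuadraticMap.Equivalent Q (QuadraticMap.weightedSumSquares ℝ fun i => Q (b i)) :=
    ⟨QuadraticMap.basisRepr_eq_of_iIsOrtho Q b hortho ▸ Q.isometryEquivBasisRepr b⟩
  obtain ⟨hp, hq⟩ := hT.eq_sigPos_sigNeg
  exact ⟨hp.trans (QuadraticForm.sigPos_of_equiv_weightedSumSquares hQ),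
    hq.trans (QuadraticForm.sigNeg_of_equiv_weightedSumSquares hQ)⟩

end LinearMap.IsTypeOf

theorem Multiset.ncard_setOf_toFinset {α : Type*} [DecidableEq α] {s : Multiset α}
    (hs : s.Nodup) (P : α → Prop) [DecidablePred P] :
    {x : s.toFinset | P x}.ncard = Multiset.card (s.filter P) := by
  rw [← Set.ncard_image_of_injective _ Subtype.val_injective,
    ← Multiset.toFinset_card_of_nodup (hs.filter P), ← Set.ncard_coe_finset]
  congr 1
  ext x
  simp [and_comm]

theorem Multiset.card_filter_pos_eq_card_filter_neg {α β : Type*} [AddCommGroup β]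
    [LinearOrder β] [IsOrderedAddMonoid β] {s : Multiset α} {σ : α → α} (hσ : s.map σ = s)
    {f : α → β} (hf : ∀ x ∈ s, f (σ x) = -f x) :
    card (s.filter (0 < f ·)) = card (s.filter (f · < 0)) := by
  conv_rhs => rw [← hσ]
  rw [Multiset.filter_map, Multiset.card_map]
  congr 1
  refine Multiset.filter_congr fun x hx => ?_
  simp [hf x hx]

theorem Finset.sum_mul_ite_eq_mul_ite_eq {ι R : Type*} [DecidableEq ι]
    [NonUnitalNonAssocSemiring R] {s : Finset ι} {a : ι} (ha : a ∈ s) (f : ι → R) (b : ι)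
    (x y : R) :
    ∑ t ∈ s, f t * (if t = a then x else 0) * (if t = b then y else 0) =
      if b = a then f a * x * y else 0 := by
  rw [Finset.sum_eq_single_of_mem a ha fun t _ hta => by simp [hta]]
  by_cases hba : b = a
  · simp [hba]
  · simp [hba, Ne.symm hba]

namespace Complex

noncomputable def sqrtConjSign (c : ℂ) : ℂ := exp (-(arg c / 2) * I)

theorem sqrtConjSign_sq_mul_self (c : ℂ) : sqrtConjSign c ^ 2 * c = ‖c‖ := by
  calc sqrtConjSign c ^ 2 * c = exp (-(arg c * I)) * (‖c‖ * exp (arg c * I)) := by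
        rw [sqrtConjSign, ← exp_nat_mul, norm_mul_exp_arg_mul_I]; ring_nf
    _ = ‖c‖ := by rw [mul_left_comm, ← exp_add, neg_add_cancel, exp_zero, mul_one]

theorem conj_sqrtConjSign_sq_mul_conj (c : ℂ) : conj (sqrtConjSign c) ^ 2 * conj c = ‖c‖ := by
  rw [← map_pow, ← map_mul, sqrtConjSign_sq_mul_self, conj_ofReal]

theorem sqrtConjSign_ne_zero (c : ℂ) : sqrtConjSign c ≠ 0 := exp_ne_zero _

end Complex

namespace Polynomial

noncomputable def realPart (Q : ℂ[X]) : ℝ[X] :=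
  ∑ n ∈ Q.support, monomial n (Q.coeff n).re

theorem coeff_realPart (Q : ℂ[X]) (n : ℕ) : (realPart Q).coeff n = (Q.coeff n).re := by
  by_cases hn : Q.coeff n = 0 <;> simp [realPart, finsetSum_coeff, coeff_monomial, hn]

theorem eval_map_conj (Q : ℂ[X]) (t : ℂ) :
    (Q.map (starRingEnd ℂ)).eval t = conj (Q.eval (conj t)) := by
  rw [eval_map, ← eval₂_at_apply, Complex.conj_conj]

theorem aeval_realPart (Q : ℂ[X]) (t : ℂ) :
    aeval t (realPart Q) = (Q.eval t + conj (Q.eval (conj t))) / 2 := by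
  have hmap :
      (realPart Q).map (algebraMap ℝ ℂ) = C (1 / 2) * (Q + Q.map (starRingEnd ℂ)) := by
    ext n
    rw [coeff_map, coeff_realPart, coeff_C_mul, coeff_add, coeff_map, Complex.coe_algebraMap,
      Complex.re_eq_add_conj]
    ring
  rw [← eval_map_algebraMap, hmap, eval_mul, eval_C, eval_add, eval_map_conj]
  ring

section RealPolynomial

open Complex

variable {g : ℝ[X]} {z w t : ℂ}

theorem aeval_of_im_eq_zero (F : ℝ[X]) (hz : z.im = 0) :
    aeval z F = ((F.eval z.re : ℝ) : ℂ) := by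
  conv_lhs => rw [← Complex.conj_eq_iff_re.mp (Complex.conj_eq_iff_im.mpr hz)]
  exact aeval_algebraMap_apply_eq_algebraMap_eval z.re F

theorem norm_aeval_conj (F : ℝ[X]) (z : ℂ) : ‖aeval (conj z) F‖ = ‖aeval z F‖ := by
  rw [aeval_conj, norm_conj]

theorem conj_mem_aroots (ht : t ∈ g.aroots ℂ) : conj t ∈ g.aroots ℂ := by
  obtain ⟨hg0, ht⟩ := mem_aroots.mp ht
  exact mem_aroots.mpr ⟨hg0, by rw [aeval_conj, ht, map_zero]⟩

theorem aroots_filter_im_eq_zero (hsep : g.Separable) :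
    (g.aroots ℂ).filter (fun z => z.im = 0) = g.roots.map ((↑) : ℝ → ℂ) := by
  rw [Multiset.Nodup.ext ((nodup_roots hsep.map).filter _)
    ((nodup_roots hsep).map Complex.ofReal_injective)]
  intro z
  simp only [Multiset.mem_filter, Multiset.mem_map, mem_aroots, mem_roots hsep.ne_zero,
    IsRoot.def]
  constructor
  · rintro ⟨⟨hg0, hz⟩, him⟩
    refine ⟨z.re, ?_, Complex.conj_eq_iff_re.mp (Complex.conj_eq_iff_im.mpr him)⟩
    rw [aeval_of_im_eq_zero g him] at hz
    exact_mod_cast hz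
  · rintro ⟨a, ha, rfl⟩
    refine ⟨⟨hsep.ne_zero, ?_⟩, Complex.ofReal_im a⟩
    rw [aeval_of_im_eq_zero g (Complex.ofReal_im a), Complex.ofReal_re, ha, Complex.ofReal_zero]

theorem map_conj_aroots (hsep : g.Separable) : (g.aroots ℂ).map conj = g.aroots ℂ := by
  rw [Multiset.Nodup.ext ((nodup_roots hsep.map).map (starRingEnd ℂ).injective)
    (nodup_roots hsep.map)]
  intro z
  simp only [Multiset.mem_map]
  exact ⟨fun ⟨w, hw, hwz⟩ => hwz ▸ conj_mem_aroots hw,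
    fun hz => ⟨conj z, conj_mem_aroots hz, Complex.conj_conj z⟩⟩

theorem ofReal_trace_mk_eq_sum_aeval (hg : g.Monic) (hsep : g.Separable) (F : ℝ[X]) :
    (Algebra.trace ℝ (AdjoinRoot g) (AdjoinRoot.mk g F) : ℂ) =
      ∑ t ∈ (g.aroots ℂ).toFinset, aeval t F := by
  rw [← Complex.coe_algebraMap, ← AdjoinRoot.trace_mk_map hg,
    AdjoinRoot.trace_mk_eq_sum_roots (hg.map _) hsep.map (IsAlgClosed.splits _)]
  simp only [eval_map_algebraMap]

theorem aeval_realPart_C_mul_lagrangeAtRoot (hsep : g.Separable) (hz : z ∈ g.aroots ℂ)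
    (ht : t ∈ g.aroots ℂ) (κ : ℂ) :
    aeval t (realPart (C κ * lagrangeAtRoot (g.map (algebraMap ℝ ℂ)) z)) =
      ((if t = z then κ else 0) + (if t = conj z then conj κ else 0)) / 2 := by
  have hsepℂ : (g.map (algebraMap ℝ ℂ)).Separable := hsep.map
  have hz := isRoot_of_mem_roots hz
  rw [aeval_realPart, eval_mul, eval_mul, eval_C, eval_C,
    eval_lagrangeAtRoot hsepℂ hz (isRoot_of_mem_roots ht),
    eval_lagrangeAtRoot hsepℂ hz (isRoot_of_mem_roots (conj_mem_aroots ht))]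
  have hconj : conj t = z ↔ t = conj z := by
    constructor <;> rintro rfl <;> simp
  simp only [hconj]
  split_ifs <;> simp

variable (H : ℝ[X])

/-- Chosen so that, for a pair `z, conj z` of non-real roots, the two `rootVector`s are
orthogonal with diagonal entries `±‖H(z)‖ / 2` (via `conj_rootCoeff_conj` and
`rootCoeff_sq_mul_of_im_pos` / `_neg`). -/
noncomputable def rootCoeff (z : ℂ) : ℂ :=
  if 0 < z.im then sqrtConjSign (aeval z H)
  else if z.im < 0 then I * conj (sqrtConjSign (aeval (conj z) H)) else 1

theorem rootCoeff_sq_mul_of_im_pos (hz : 0 < z.im) :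
    rootCoeff H z ^ 2 * aeval z H = ‖aeval z H‖ := by
  rw [rootCoeff, if_pos hz, sqrtConjSign_sq_mul_self]

theorem rootCoeff_sq_mul_of_im_neg (hz : z.im < 0) :
    rootCoeff H z ^ 2 * aeval z H = -‖aeval z H‖ := by
  have h := conj_sqrtConjSign_sq_mul_conj (aeval (conj z) H)
  rw [← aeval_conj, Complex.conj_conj, norm_aeval_conj] at h
  rw [rootCoeff, if_neg hz.not_gt, if_pos hz, mul_pow, I_sq, neg_one_mul, neg_mul, h]

theorem conj_rootCoeff_conj (hz : z.im ≠ 0) :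
    conj (rootCoeff H (conj z)) = -(I * rootCoeff H z) := by
  rcases hz.lt_or_gt with hz | hz
  · have hz' : 0 < (conj z).im := by rw [conj_im]; linarith
    rw [rootCoeff, if_pos hz', rootCoeff, if_neg hz.not_gt, if_pos hz]
    ring_nf
    rw [I_sq]
    ring
  · have hz' : (conj z).im < 0 := by rw [conj_im]; linarith
    rw [rootCoeff, if_neg hz'.not_gt, if_pos hz', rootCoeff, if_pos hz, Complex.conj_conj,
      map_mul, conj_I, Complex.conj_conj]
    ring

theorem rootCoeff_ne_zero : rootCoeff H z ≠ 0 := by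
  unfold rootCoeff
  split_ifs
  · exact sqrtConjSign_ne_zero _
  · exact mul_ne_zero I_ne_zero ((_root_.map_ne_zero _).mpr (sqrtConjSign_ne_zero _))
  · exact one_ne_zero

variable (g) in
noncomputable def rootVector (z : ℂ) : AdjoinRoot g :=
  AdjoinRoot.mk g (realPart (C (rootCoeff H z) * lagrangeAtRoot (g.map (algebraMap ℝ ℂ)) z))

theorem ofReal_trace_mul_rootVector (hg : g.Monic) (hsep : g.Separable) (hz : z ∈ g.aroots ℂ)
    (hw : w ∈ g.aroots ℂ) :
    (Algebra.trace ℝ (AdjoinRoot g)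
        (AdjoinRoot.mk g H * rootVector g H z * rootVector g H w) : ℂ) =
      ∑ t ∈ (g.aroots ℂ).toFinset, aeval t H *
        (((if t = z then rootCoeff H z else 0) +
          (if t = conj z then conj (rootCoeff H z) else 0)) / 2) *
        (((if t = w then rootCoeff H w else 0) +
          (if t = conj w then conj (rootCoeff H w) else 0)) / 2) := by
  rw [rootVector, rootVector, ← map_mul, ← map_mul, ofReal_trace_mk_eq_sum_aeval hg hsep]
  refine Finset.sum_congr rfl fun t ht => ?_
  have ht := Multiset.mem_toFinset.mp ht
  rw [map_mul, map_mul, aeval_realPart_C_mul_lagrangeAtRoot hsep hz ht,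
    aeval_realPart_C_mul_lagrangeAtRoot hsep hw ht]

theorem two_mul_trace_mul_rootVector (hg : g.Monic) (hsep : g.Separable) (hz : z ∈ g.aroots ℂ)
    (hw : w ∈ g.aroots ℂ) :
    2 * Algebra.trace ℝ (AdjoinRoot g) (AdjoinRoot.mk g H * rootVector g H z * rootVector g H w) =
      ((if w = z then aeval z H * rootCoeff H z * rootCoeff H w else 0) +
        (if w = conj z then aeval z H * rootCoeff H z * conj (rootCoeff H w) else 0)).re := by
  set S := (if w = z then aeval z H * rootCoeff H z * rootCoeff H w else 0) +
    (if w = conj z then aeval z H * rootCoeff H z * conj (rootCoeff H w) else 0)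
  suffices h4 : 4 * (Algebra.trace ℝ (AdjoinRoot g)
      (AdjoinRoot.mk g H * rootVector g H z * rootVector g H w) : ℂ) = S + conj S by
    rw [Complex.add_conj] at h4
    have h4ℝ : 4 * Algebra.trace ℝ (AdjoinRoot g)
        (AdjoinRoot.mk g H * rootVector g H z * rootVector g H w) = 2 * S.re := by
      exact_mod_cast h4
    linarith
  have hz' := Multiset.mem_toFinset.mpr hz
  have hzc := Multiset.mem_toFinset.mpr (conj_mem_aroots hz)
  have hconj : conj w = z ↔ w = conj z := by constructor <;> rintro rfl <;> simp
  rw [ofReal_trace_mul_rootVector H hg hsep hz hw, Finset.mul_sum]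
  calc _ = ∑ t ∈ (g.aroots ℂ).toFinset,
          (aeval t H * (if t = z then rootCoeff H z else 0) *
            (if t = w then rootCoeff H w else 0) +
          aeval t H * (if t = z then rootCoeff H z else 0) *
            (if t = conj w then conj (rootCoeff H w) else 0) +
          aeval t H * (if t = conj z then conj (rootCoeff H z) else 0) *
            (if t = w then rootCoeff H w else 0) +
          aeval t H * (if t = conj z then conj (rootCoeff H z) else 0) *
            (if t = conj w then conj (rootCoeff H w) else 0)) :=
        Finset.sum_congr rfl fun t _ => by ring
    _ = S + conj S := by
        simp only [Finset.sum_add_distrib, Finset.sum_mul_ite_eq_mul_ite_eq hz',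
          Finset.sum_mul_ite_eq_mul_ite_eq hzc, S, hconj, (starRingEnd ℂ).injective.eq_iff,
          map_add, apply_ite conj, map_mul, map_zero, aeval_conj, Complex.conj_conj]
        ring

noncomputable def traceFormDiag (z : ℂ) : ℝ :=
  if 0 < z.im then ‖aeval z H‖ / 2 else if z.im < 0 then -(‖aeval z H‖ / 2) else H.eval z.re

theorem trace_mul_rootVector_self (hg : g.Monic) (hsep : g.Separable) (hz : z ∈ g.aroots ℂ) :
    Algebra.trace ℝ (AdjoinRoot g) (AdjoinRoot.mk g H * rootVector g H z * rootVector g H z) =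
      traceFormDiag H z := by
  have h2 := two_mul_trace_mul_rootVector H hg hsep hz hz
  rw [if_pos rfl, show aeval z H * rootCoeff H z * rootCoeff H z =
    rootCoeff H z ^ 2 * aeval z H by ring] at h2
  rcases lt_trichotomy z.im 0 with hneg | hreal | hpos
  · have hne : z ≠ conj z := fun h => hneg.ne (conj_eq_iff_im.mp h.symm)
    rw [if_neg hne, add_zero, rootCoeff_sq_mul_of_im_neg H hneg, neg_re, ofReal_re] at h2
    rw [traceFormDiag, if_neg hneg.not_gt, if_pos hneg]
    linarith
  · rw [if_pos (conj_eq_iff_im.mpr hreal).symm, rootCoeff, if_neg hreal.not_gt,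
      if_neg hreal.not_lt, map_one, aeval_of_im_eq_zero H hreal] at h2
    simp only [one_pow, one_mul, mul_one, add_re, ofReal_re] at h2
    rw [traceFormDiag, if_neg hreal.not_gt, if_neg hreal.not_lt]
    linarith
  · have hne : z ≠ conj z := fun h => hpos.ne' (conj_eq_iff_im.mp h.symm)
    rw [if_neg hne, add_zero, rootCoeff_sq_mul_of_im_pos H hpos, ofReal_re] at h2
    rw [traceFormDiag, if_pos hpos]
    linarith

theorem trace_mul_rootVector_of_ne (hg : g.Monic) (hsep : g.Separable) (hz : z ∈ g.aroots ℂ)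
    (hw : w ∈ g.aroots ℂ) (hzw : z ≠ w) :
    Algebra.trace ℝ (AdjoinRoot g)
      (AdjoinRoot.mk g H * rootVector g H z * rootVector g H w) = 0 := by
  have h2 := two_mul_trace_mul_rootVector H hg hsep hz hw
  rw [if_neg (Ne.symm hzw), zero_add] at h2
  split_ifs at h2 with hconj
  · subst hconj
    have him : z.im ≠ 0 := fun h => hzw (conj_eq_iff_im.mpr h).symm
    rw [conj_rootCoeff_conj H him] at h2
    have hreal : (aeval z H * rootCoeff H z * -(I * rootCoeff H z)).re = 0 := by
      rw [show aeval z H * rootCoeff H z * -(I * rootCoeff H z) =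
        -(I * (rootCoeff H z ^ 2 * aeval z H)) by ring]
      rcases him.lt_or_gt with hneg | hpos
      · simp [rootCoeff_sq_mul_of_im_neg H hneg]
      · simp [rootCoeff_sq_mul_of_im_pos H hpos]
    linarith
  · simp only [zero_re] at h2
    linarith

theorem linearIndependent_rootVector (hsep : g.Separable) :
    LinearIndependent ℝ fun z : (g.aroots ℂ).toFinset => rootVector g H z := by
  rw [Fintype.linearIndependent_iff]
  intro r hr j
  have hj : (j : ℂ) ∈ g.aroots ℂ := Multiset.mem_toFinset.mp j.2
  let jc : (g.aroots ℂ).toFinset := ⟨conj j, Multiset.mem_toFinset.mpr (conj_mem_aroots hj)⟩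
  have hjc (z : (g.aroots ℂ).toFinset) : (j : ℂ) = conj (z : ℂ) ↔ z = jc := by
    rw [Subtype.ext_iff]
    constructor <;> intro h <;> simp [jc, h]
  let evalj := AdjoinRoot.liftAlgHom g (Algebra.ofId ℝ ℂ) (j : ℂ)
    (by simpa [aeval_def] using (mem_aroots.mp hj).2)
  have hevalj (P : ℝ[X]) : evalj (AdjoinRoot.mk g P) = aeval (j : ℂ) P := rfl
  have h := congrArg evalj hr
  simp only [map_sum, map_smul, map_zero, rootVector, hevalj,
    aeval_realPart_C_mul_lagrangeAtRoot hsep (Multiset.mem_toFinset.mp (Subtype.prop _)) hj] at h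
  simp only [Subtype.coe_inj, hjc, ← smul_div_assoc, ← Finset.sum_div, div_eq_zero_iff,
    two_ne_zero, or_false, smul_add, smul_ite, smul_zero, Finset.sum_add_distrib,
    Finset.sum_ite_eq, Finset.sum_ite_eq', Finset.mem_univ, if_true, Complex.real_smul] at h
  by_cases him : (j : ℂ).im = 0
  · have hjj : jc = j := Subtype.ext (conj_eq_iff_im.mpr him)
    rw [hjj, rootCoeff, if_neg him.not_gt, if_neg him.not_lt, map_one] at h
    exact_mod_cast (by linear_combination h / 2 : (r j : ℂ) = 0)
  · rw [conj_rootCoeff_conj H him] at h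
    have hfac : rootCoeff H j * ((r j : ℂ) - I * r jc) = 0 := by linear_combination h
    simpa using congrArg re ((mul_eq_zero.mp hfac).resolve_left (rootCoeff_ne_zero H))

theorem card_aroots_toFinset_eq_finrank (hg : g.Monic) (hsep : g.Separable) :
    Fintype.card (g.aroots ℂ).toFinset = Module.finrank ℝ (AdjoinRoot g) := by
  rw [Fintype.card_coe, Multiset.toFinset_card_of_nodup (nodup_roots hsep.map),
    ← (IsAlgClosed.splits _).natDegree_eq_card_roots, hg.natDegree_map,
    (AdjoinRoot.powerBasis' hg).finrank]
  rfl

noncomputable def rootBasis (hg : g.Monic) (hsep : g.Separable) :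
    Module.Basis (g.aroots ℂ).toFinset ℝ (AdjoinRoot g) :=
  .mk (linearIndependent_rootVector H hsep) <| by
    have := hg.finite_adjoinRoot
    exact ((linearIndependent_rootVector H hsep).span_eq_top_of_card_eq_finrank'
      (card_aroots_toFinset_eq_finrank hg hsep)).ge

theorem rootBasis_apply (hg : g.Monic) (hsep : g.Separable) (z : (g.aroots ℂ).toFinset) :
    rootBasis H hg hsep z = rootVector g H z :=
  Module.Basis.mk_apply ..

theorem traceFormDiag_ofReal (a : ℝ) : traceFormDiag H a = H.eval a := by
  simp [traceFormDiag]

theorem traceFormDiag_conj (hz : z.im ≠ 0) : traceFormDiag H (conj z) = -traceFormDiag H z := by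
  rcases hz.lt_or_gt with hz | hz <;>
    simp [traceFormDiag, hz, lt_asymm hz, norm_aeval_conj]

theorem traceFormDiag_ne_zero_iff : traceFormDiag H z ≠ 0 ↔ aeval z H ≠ 0 := by
  rcases lt_trichotomy z.im 0 with hz | hz | hz
  · simp [traceFormDiag, hz, hz.not_gt]
  · simp [traceFormDiag, hz, aeval_of_im_eq_zero H hz]
  · simp [traceFormDiag, hz]

theorem card_filter_traceFormDiag_pos_sub_neg (hsep : g.Separable) :
    (Multiset.card ((g.aroots ℂ).filter (0 < traceFormDiag H ·)) : ℤ) -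
        Multiset.card ((g.aroots ℂ).filter (traceFormDiag H · < 0)) =
      Multiset.card (g.roots.filter (0 < H.eval ·)) -
        Multiset.card (g.roots.filter (H.eval · < 0)) := by
  have hN : ((g.aroots ℂ).filter fun z => ¬z.im = 0).map conj =
      (g.aroots ℂ).filter fun z => ¬z.im = 0 := by
    conv_rhs => rw [← map_conj_aroots hsep]
    rw [Multiset.filter_map]
    exact congrArg _ (Multiset.filter_congr fun z _ => by simp)
  have hsplit (P : ℂ → Prop) [DecidablePred P] : Multiset.card ((g.aroots ℂ).filter P) =
      Multiset.card (g.roots.filter (P ∘ (↑))) +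
        Multiset.card (((g.aroots ℂ).filter fun z => ¬z.im = 0).filter P) := by
    conv_lhs => rw [← Multiset.filter_add_not (fun z : ℂ => z.im = 0) (g.aroots ℂ)]
    rw [Multiset.filter_add, Multiset.card_add, Multiset.filter_filter, Multiset.filter_filter,
      ← Multiset.filter_filter, aroots_filter_im_eq_zero hsep, Multiset.filter_map,
      Multiset.card_map]
  have hnonreal := Multiset.card_filter_pos_eq_card_filter_neg hN fun z hz =>
    traceFormDiag_conj H (Multiset.of_mem_filter (p := fun z : ℂ => ¬z.im = 0) hz)
  rw [hsplit, hsplit, hnonreal]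
  simp only [Function.comp_def, traceFormDiag_ofReal]
  push_cast
  ring

theorem card_filter_traceFormDiag_pos_add_neg :
    Multiset.card ((g.aroots ℂ).filter (0 < traceFormDiag H ·)) +
        Multiset.card ((g.aroots ℂ).filter (traceFormDiag H · < 0)) =
      Multiset.card ((g.aroots ℂ).filter (aeval · H ≠ 0)) := by
  rw [← Multiset.filter_add_not (0 < traceFormDiag H ·)
      ((g.aroots ℂ).filter (aeval · H ≠ 0)),
    Multiset.card_add, Multiset.filter_filter, Multiset.filter_filter]
  congr 2 <;> refine Multiset.filter_congr fun z _ => ?_ <;>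
    rw [← traceFormDiag_ne_zero_iff]
  · exact ⟨fun h => ⟨h, h.ne'⟩, And.left⟩
  · exact ⟨fun h => ⟨lt_asymm h, h.ne⟩, fun ⟨h, h0⟩ => lt_of_le_of_ne (not_lt.mp h) h0⟩

end RealPolynomial

end Polynomial

/-- Pederson–Roy–Szpirglas theorem, univariate form: for `A = ℝ[X]/⟨g⟩` with `g` monic
squarefree and `h` the image of `H ∈ ℝ[X]`, the generalized trace form
`Φ_h(f,f') = Tr(λ_{h f f'})` has signature `#{a real root of g : H(a) > 0} −
#{a real root of g : H(a) < 0}` and rank `#{z complex root of g : H(z) ≠ 0}`. -/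
theorem stmt_18 (g : Polynomial ℝ) (hg : g.Monic) (hsf : Squarefree g)
    (H : Polynomial ℝ)
    (h : Polynomial ℝ ⧸ Ideal.span {g})
    (hh : h = Ideal.Quotient.mk (Ideal.span {g}) H)
    (Φ : (Polynomial ℝ ⧸ Ideal.span {g}) →ₗ[ℝ] (Polynomial ℝ ⧸ Ideal.span {g}) →ₗ[ℝ] ℝ)
    (hΦ : ∀ f f' : Polynomial ℝ ⧸ Ideal.span {g},
      Φ f f' = Algebra.traceForm ℝ (Polynomial ℝ ⧸ Ideal.span {g}) (h * f) f')
    (p q : ℕ) (hT : Φ.IsTypeOf p q) :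
    (p : ℤ) - q =
      (Multiset.card (g.roots.filter (fun a => 0 < H.eval a)) : ℤ) -
        Multiset.card (g.roots.filter (fun a => H.eval a < 0)) ∧
    p + q = Multiset.card (((g.map (algebraMap ℝ ℂ)).roots).filter
      (fun z => (H.map (algebraMap ℝ ℂ)).eval z ≠ 0)) := by
  have hsep : g.Separable := PerfectField.separable_iff_squarefree.mpr hsf
  have := hg.finite_quotient
  have hmem (z : (g.aroots ℂ).toFinset) : (z : ℂ) ∈ g.aroots ℂ := Multiset.mem_toFinset.mp z.2
  -- `AdjoinRoot g` is by definition `ℝ[X] ⧸ Ideal.span {g}`.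
  let b : Module.Basis (g.aroots ℂ).toFinset ℝ (ℝ[X] ⧸ Ideal.span {g}) := rootBasis H hg hsep
  have hb (z w : (g.aroots ℂ).toFinset) :
      Φ (b z) (b w) = Algebra.trace ℝ (AdjoinRoot g)
        (AdjoinRoot.mk g H * rootVector g H z * rootVector g H w) := by
    rw [hΦ, Algebra.traceForm_apply, hh]
    exact congrArg (Algebra.trace ℝ (AdjoinRoot g)) (congrArg₂ (· * ·)
      (congrArg _ (rootBasis_apply H hg hsep z)) (rootBasis_apply H hg hsep w))
  obtain ⟨hp, hq⟩ := hT.eq_ncard_of_basis b fun z w hzw => (hb z w).trans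
    (trace_mul_rootVector_of_ne H hg hsep (hmem z) (hmem w) (Subtype.coe_injective.ne hzw))
  simp only [hb, trace_mul_rootVector_self H hg hsep (hmem _)] at hp hq
  rw [Multiset.ncard_setOf_toFinset (nodup_roots hsep.map) (0 < traceFormDiag H ·)] at hp
  rw [Multiset.ncard_setOf_toFinset (nodup_roots hsep.map) (traceFormDiag H · < 0)] at hq
  subst hp hq
  simp only [eval_map_algebraMap]
  exact ⟨card_filter_traceFormDiag_pos_sub_neg H hsep, card_filter_traceFormDiag_pos_add_neg H⟩
end

section
/- Let K be an infinite perfect field, 𝔄 ⊆ K[X₁,…,Xₙ] a radical ideal such that A = K[X₁,…,Xₙ]/𝔄 is finite-dimensional over K, and assume the last coordinates of the points of V_{K̄}(𝔄) ⊆ K̄ⁿ are pairwise distinct. Then there exist polynomials g₁,…,g_{n−1}, g_n ∈ K[T] with g_n squarefree of degree m = dim_K A such that 𝔄 = ⟨X₁ − g₁(Xₙ), …, X_{n−1} − g_{n−1}(Xₙ), g_n(Xₙ)⟩. In particular, 1, xₙ, …, xₙ^{m−1} is a K-basis of A, where xₙ is the image of Xₙ. -/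
/-!
The reduced finite-dimensional algebra `A = K[X₁, …, Xₙ]/𝔄` is a product of finite field
extensions of `K`, separable because `K` is perfect, so `A` has at least `dim_K A` algebra
maps to `K̄`. These maps are the points of `V_K̄(𝔄)`, so in general position they are told
apart by their value at `xₙ`, which is a root of the minimal polynomial of `xₙ`. Hence
`dim_K K[xₙ] = deg minpoly(xₙ) ≥ dim_K A`, i.e. `K[xₙ] = A`. Writing `xᵢ = gᵢ(xₙ)`, every
`F ∈ 𝔄` reduces modulo the `Xᵢ - gᵢ(Xₙ)` to a polynomial in `Xₙ` killed by `xₙ`, hence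
divisible by the minimal polynomial, which is squarefree because `A` is reduced.
-/

open Polynomial

section CountingAlgHoms

variable {K A : Type*} [Field K] [CommRing A] [Algebra K A]

theorem injective_sigma_maximalSpectrum_algHom_comp {L : Type*} [Ring L] [Nontrivial L]
    [Algebra K L] :
    Function.Injective fun s : Σ m : MaximalSpectrum A, (A ⧸ m.asIdeal →ₐ[K] L) =>
      s.2.comp (Ideal.Quotient.mkₐ K s.1.asIdeal) := by
  rintro ⟨m, ψ⟩ ⟨m', ψ'⟩ h
  have hker (m : MaximalSpectrum A) (ψ : A ⧸ m.asIdeal →ₐ[K] L) :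
      RingHom.ker (ψ.comp (Ideal.Quotient.mkₐ K m.asIdeal)) = m.asIdeal := by
    let := Ideal.Quotient.field m.asIdeal
    ext a
    rw [RingHom.mem_ker, AlgHom.comp_apply, Ideal.Quotient.mkₐ_eq_mk,
      map_eq_zero_iff ψ ψ.toRingHom.injective, Ideal.Quotient.eq_zero_iff_mem]
  replace h : ψ.comp (Ideal.Quotient.mkₐ K m.asIdeal) =
      ψ'.comp (Ideal.Quotient.mkₐ K m'.asIdeal) := h
  obtain rfl : m = m' := MaximalSpectrum.ext (by rw [← hker m ψ, ← hker m' ψ', h])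
  obtain rfl : ψ = ψ' := Ideal.Quotient.algHom_ext K h
  rfl

theorem finrank_le_card_algHom {L : Type*} [Field L] [IsAlgClosed L] [Algebra K L]
    [PerfectField K] [IsReduced A] [FiniteDimensional K A] :
    Module.finrank K A ≤ Nat.card (A →ₐ[K] L) := by
  have : IsArtinianRing A := .of_finite K A
  have := Fintype.ofFinite (MaximalSpectrum A)
  let (m : MaximalSpectrum A) := Ideal.Quotient.field m.asIdeal
  calc Module.finrank K A
      = ∑ m : MaximalSpectrum A, Module.finrank K (A ⧸ m.asIdeal) := by
        rw [((IsArtinianRing.equivPi A).restrictScalars K).toLinearEquiv.finrank_eq,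
          Module.finrank_pi_fintype]
    _ = Nat.card (Σ m : MaximalSpectrum A, (A ⧸ m.asIdeal →ₐ[K] L)) := by
        rw [Nat.card_sigma]
        refine Finset.sum_congr rfl fun m _ => ?_
        rw [Nat.card_eq_fintype_card, AlgHom.card]
    _ ≤ Nat.card (A →ₐ[K] L) :=
        Nat.card_le_card_of_injective _ injective_sigma_maximalSpectrum_algHom_comp

theorem card_algHom_le_natDegree_minpoly {L : Type*} [CommRing L] [IsDomain L] [Algebra K L]
    [FiniteDimensional K A] {x : A} (hx : Function.Injective fun σ : A →ₐ[K] L => σ x) :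
    Nat.card (A →ₐ[K] L) ≤ (minpoly K x).natDegree := by
  have := Fintype.ofFinite (A →ₐ[K] L)
  rw [Nat.card_eq_fintype_card, ← natDegree_map (algebraMap K L)]
  by_contra! hlt
  refine map_ne_zero (minpoly.ne_zero (.of_finite K x)) <|
    eq_zero_of_natDegree_lt_card_of_eval_eq_zero _ hx (fun σ => ?_) hlt
  rw [eval_map_algebraMap, aeval_algHom_apply, minpoly.aeval, map_zero]

theorem adjoin_singleton_eq_top_of_injective_eval {L : Type*} [Field L] [IsAlgClosed L]
    [Algebra K L] [PerfectField K] [IsReduced A] [FiniteDimensional K A] {x : A}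
    (hx : Function.Injective fun σ : A →ₐ[K] L => σ x) :
    Algebra.adjoin K {x} = ⊤ := by
  have hdeg : Module.finrank K (Algebra.adjoin K {x}) = (minpoly K x).natDegree :=
    (Algebra.adjoin.powerBasis (.of_finite K x)).finrank
  refine Algebra.toSubmodule_eq_top.1 (Submodule.eq_top_of_finrank_eq (le_antisymm
    (Submodule.finrank_le _) ?_))
  calc Module.finrank K A ≤ Nat.card (A →ₐ[K] L) := finrank_le_card_algHom
    _ ≤ (minpoly K x).natDegree := card_algHom_le_natDegree_minpoly hx
    _ = _ := hdeg.symm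

end CountingAlgHoms

namespace MvPolynomial

variable {σ R : Type*} [CommRing R]

theorem sub_mem_span_X_sub (φ : MvPolynomial σ R →ₐ[R] MvPolynomial σ R)
    (F : MvPolynomial σ R) : F - φ F ∈ Ideal.span (Set.range fun i => X i - φ (X i)) := by
  set J := Ideal.span (Set.range fun i => X i - φ (X i))
  have : (Ideal.Quotient.mkₐ R J).comp φ = Ideal.Quotient.mkₐ R J :=
    algHom_ext fun i => (Ideal.Quotient.mk_eq_mk_iff_sub_mem _ _).2 <|
      neg_sub (X i) (φ (X i)) ▸ J.neg_mem (Ideal.subset_span ⟨i, rfl⟩)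
  exact (Ideal.Quotient.mk_eq_mk_iff_sub_mem _ _).1 (DFunLike.congr_fun this F).symm

variable {L : Type*} [CommRing L] [Algebra R L] {I : Ideal (MvPolynomial σ R)}

theorem aeval_algHom_quotient_mk (φ : (MvPolynomial σ R ⧸ I) →ₐ[R] L)
    (F : MvPolynomial σ R) :
    aeval (fun i => φ (Ideal.Quotient.mk I (X i))) F = φ (Ideal.Quotient.mk I F) :=
  (DFunLike.congr_fun (aeval_unique (φ.comp (Ideal.Quotient.mkₐ R I))) F).symm

theorem injective_algHom_eval_X (i₀ : σ)
    (hsep : ∀ a b : σ → L, (∀ F ∈ I, aeval a F = 0) → (∀ F ∈ I, aeval b F = 0) →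
      a i₀ = b i₀ → a = b) :
    Function.Injective fun φ : (MvPolynomial σ R ⧸ I) →ₐ[R] L =>
      φ (Ideal.Quotient.mk I (X i₀)) := by
  have hzero (φ : (MvPolynomial σ R ⧸ I) →ₐ[R] L) (F) (hF : F ∈ I) :
      aeval (fun i => φ (Ideal.Quotient.mk I (X i))) F = 0 := by
    rw [aeval_algHom_quotient_mk, Ideal.Quotient.eq_zero_iff_mem.2 hF, map_zero]
  intro φ ψ h
  have hpt := hsep _ _ (hzero φ) (hzero ψ) h
  exact Ideal.Quotient.algHom_ext R (algHom_ext fun i => congrFun hpt i)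

end MvPolynomial

theorem ideal_eq_span_X_sub_aeval {K : Type*} [Field K] {n : ℕ}
    (I : Ideal (MvPolynomial (Fin (n + 1)) K)) (g : Fin (n + 1) → K[X])
    (hg : ∀ i : Fin n, Ideal.Quotient.mk I (MvPolynomial.X i.castSucc) =
      aeval (Ideal.Quotient.mk I (MvPolynomial.X (Fin.last n))) (g i.castSucc))
    (hlast : g (Fin.last n) = minpoly K (Ideal.Quotient.mk I (MvPolynomial.X (Fin.last n)))) :
    I = Ideal.span
      ((Set.range fun i : Fin n =>
          MvPolynomial.X i.castSucc - aeval (MvPolynomial.X (Fin.last n)) (g i.castSucc)) ∪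
        {aeval (MvPolynomial.X (Fin.last n)) (g (Fin.last n))}) := by
  set x := Ideal.Quotient.mk I (MvPolynomial.X (Fin.last n))
  set J : Ideal (MvPolynomial (Fin (n + 1)) K) := Ideal.span
    ((Set.range fun i : Fin n =>
        MvPolynomial.X i.castSucc - aeval (MvPolynomial.X (Fin.last n)) (g i.castSucc)) ∪
      {aeval (MvPolynomial.X (Fin.last n)) (g (Fin.last n))})
  have hmk (q : K[X]) : Ideal.Quotient.mk I (aeval (MvPolynomial.X (Fin.last n)) q) = aeval x q :=
    (aeval_algHom_apply (Ideal.Quotient.mkₐ K I) _ q).symm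
  have hJI : J ≤ I := by
    rw [Ideal.span_le]
    rintro F (⟨i, rfl⟩ | rfl)
    · rw [SetLike.mem_coe, ← Ideal.Quotient.mk_eq_mk_iff_sub_mem, hmk, hg]
    · rw [SetLike.mem_coe, ← Ideal.Quotient.eq_zero_iff_mem, hmk, hlast, minpoly.aeval]
  refine le_antisymm (fun F hF => ?_) hJI
  -- `φ` substitutes `gᵢ(Xₙ)` for `Xᵢ` (`i < n`) and fixes `Xₙ`, so `φ F = q(Xₙ)`
  let s : Fin (n + 1) → K[X] := Fin.snoc (fun i => g i.castSucc) Polynomial.X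
  let q := MvPolynomial.aeval s F
  let φ : MvPolynomial (Fin (n + 1)) K →ₐ[K] MvPolynomial (Fin (n + 1)) K :=
    (aeval (MvPolynomial.X (Fin.last n))).comp (MvPolynomial.aeval s)
  have hφ : F - aeval (MvPolynomial.X (Fin.last n)) q ∈ J := by
    refine Ideal.span_le.2 ?_ (MvPolynomial.sub_mem_span_X_sub φ F)
    rintro _ ⟨i, rfl⟩
    induction i using Fin.lastCases with
    | last => simp [φ, s]
    | cast i => exact Ideal.subset_span (Or.inl ⟨i, by simp [φ, s]⟩)
  have hq : aeval x q = 0 := by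
    rw [← hmk, Ideal.Quotient.eq_zero_iff_mem, ← sub_sub_cancel F (aeval _ q)]
    exact I.sub_mem hF (hJI hφ)
  obtain ⟨r, hr⟩ := minpoly.dvd K x hq
  have hqJ : aeval (MvPolynomial.X (Fin.last n)) q ∈ J := by
    rw [hr, map_mul, ← hlast]
    exact J.mul_mem_right _ (Ideal.subset_span (Or.inr rfl))
  simpa using J.add_mem hφ hqJ

theorem stmt_19_general (K : Type*) [Field K] [PerfectField K] (n : ℕ)
    (𝔄 : Ideal (MvPolynomial (Fin (n + 1)) K)) (hrad : 𝔄.IsRadical)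
    [FiniteDimensional K (MvPolynomial (Fin (n + 1)) K ⧸ 𝔄)]
    (hpos : ∀ a b : Fin (n + 1) → AlgebraicClosure K,
      (∀ F ∈ 𝔄, MvPolynomial.aeval a F = 0) →
      (∀ F ∈ 𝔄, MvPolynomial.aeval b F = 0) →
      a (Fin.last n) = b (Fin.last n) → a = b) :
    ∃ g : Fin (n + 1) → Polynomial K,
      Squarefree (g (Fin.last n)) ∧
      (g (Fin.last n)).natDegree = Module.finrank K (MvPolynomial (Fin (n + 1)) K ⧸ 𝔄) ∧
      𝔄 = Ideal.span
        ((Set.range fun i : Fin n =>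
            MvPolynomial.X i.castSucc -
              Polynomial.aeval (MvPolynomial.X (Fin.last n)) (g i.castSucc)) ∪
          {Polynomial.aeval (MvPolynomial.X (Fin.last n)) (g (Fin.last n))}) ∧
      ∃ b : Module.Basis (Fin (Module.finrank K (MvPolynomial (Fin (n + 1)) K ⧸ 𝔄))) K
          (MvPolynomial (Fin (n + 1)) K ⧸ 𝔄),
        ∀ k, b k = (Ideal.Quotient.mk 𝔄 (MvPolynomial.X (Fin.last n))) ^ (k : ℕ) := by
  have := (Ideal.isRadical_iff_quotient_reduced 𝔄).mp hrad
  set x := Ideal.Quotient.mk 𝔄 (MvPolynomial.X (Fin.last n))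
  have htop : Algebra.adjoin K {x} = ⊤ :=
    adjoin_singleton_eq_top_of_injective_eval (MvPolynomial.injective_algHom_eval_X _ hpos)
  let pb := PowerBasis.ofAdjoinEqTop (.of_finite K x) htop
  have hdeg : (minpoly K x).natDegree = Module.finrank K _ := pb.finrank.symm
  have hsurj : Function.Surjective (aeval x : K[X] →ₐ[K] _) := by
    rw [← AlgHom.range_eq_top, ← Algebra.adjoin_singleton_eq_range_aeval, htop]
  choose g hg using fun i : Fin n => hsurj (Ideal.Quotient.mk 𝔄 (MvPolynomial.X i.castSucc))
  refine ⟨Fin.snoc g (minpoly K x), ?_, ?_, ?_, pb.basis.reindex (finCongr hdeg), fun k => ?_⟩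
  · simpa using (minpoly.isRadical K x).squarefree (minpoly.ne_zero (.of_finite K x))
  · simpa using hdeg
  · exact ideal_eq_span_X_sub_aeval 𝔄 _ (by simpa using fun i => (hg i).symm)
      (Fin.snoc_last _ _)
  · rw [Module.Basis.reindex_apply, pb.basis_eq_pow, PowerBasis.ofAdjoinEqTop_gen]
    rfl

/-- Shape Lemma. -/
theorem stmt_19 (K : Type*) [Field K] [Infinite K] [PerfectField K] (n : ℕ)
    (𝔄 : Ideal (MvPolynomial (Fin (n + 1)) K)) (hrad : 𝔄.IsRadical)
    [FiniteDimensional K (MvPolynomial (Fin (n + 1)) K ⧸ 𝔄)]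
    (hpos : ∀ a b : Fin (n + 1) → AlgebraicClosure K,
      (∀ F ∈ 𝔄, MvPolynomial.aeval a F = 0) →
      (∀ F ∈ 𝔄, MvPolynomial.aeval b F = 0) →
      a (Fin.last n) = b (Fin.last n) → a = b) :
    ∃ g : Fin (n + 1) → Polynomial K,
      Squarefree (g (Fin.last n)) ∧
      (g (Fin.last n)).natDegree = Module.finrank K (MvPolynomial (Fin (n + 1)) K ⧸ 𝔄) ∧
      𝔄 = Ideal.span
        ((Set.range fun i : Fin n =>
            MvPolynomial.X i.castSucc -
              Polynomial.aeval (MvPolynomial.X (Fin.last n)) (g i.castSucc)) ∪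
          {Polynomial.aeval (MvPolynomial.X (Fin.last n)) (g (Fin.last n))}) ∧
      ∃ b : Module.Basis (Fin (Module.finrank K (MvPolynomial (Fin (n + 1)) K ⧸ 𝔄))) K
          (MvPolynomial (Fin (n + 1)) K ⧸ 𝔄),
        ∀ k, b k = (Ideal.Quotient.mk 𝔄 (MvPolynomial.X (Fin.last n))) ^ (k : ℕ) :=
  stmt_19_general K n 𝔄 hrad hpos
end
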